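/- arXiv:1901.08776 — 8 statements merged into one kernel-verified Lean document; each statement's English description precedes it below -/
import Mathlib

section
/- Let S be a completely regular semigroup and ρ a congruence on S. Then for all a, b ∈ S, a ρ b if and only if a⁰ ρ b⁰ and ab⁻¹ ∈ ker ρ, where ker ρ = {a ∈ S : a ρ e for some idempotent e}. -/
/-- A completely regular semigroup: a semigroup with a unary inversion such that
every element lies in a subgroup; `a⁻¹` is the group inverse of `a` in its maximal
subgroup and `a * a⁻¹` is the identity of that subgroup. -/
class CompletelyRegularSemigroup (S : Type*) extends Semigroup S, Inv S where
  mul_inv_mul (a : S) : a * a⁻¹ * a = a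
  inv_mul_inv (a : S) : a⁻¹ * a * a⁻¹ = a⁻¹
  mul_inv_comm (a : S) : a * a⁻¹ = a⁻¹ * a

variable {S : Type*} [CompletelyRegularSemigroup S]

/-- Green's relation `H` on a completely regular semigroup: `a H b` iff
`a` and `b` lie in the same maximal subgroup, i.e. `a⁰ = b⁰`. -/
def hRel (a b : S) : Prop := a * a⁻¹ = b * b⁻¹

/-- The relation `Θ`: `a Θ b` iff `a⁰ * b = a * b⁰`. -/
def thetaRel (a b : S) : Prop := (a * a⁻¹) * b = a * (b * b⁻¹)

/-- The relation `F`: `a F b` iff `a * b⁻¹` is idempotent. -/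
def fRel (a b : S) : Prop := IsIdempotentElem (a * b⁻¹)

/-- The kernel of a congruence: the union of the congruence classes of idempotents. -/
def conKer (c : Con S) : Set S := {a | ∃ e : S, IsIdempotentElem e ∧ c a e}

open CompletelyRegularSemigroup

/-- Any congruence on a completely regular semigroup respects inversion. -/
lemma con_inv (ρ : Con S) {a b : S} (h : ρ a b) : ρ a⁻¹ b⁻¹ := by
  have A1 : ρ (b * b⁻¹) ((a * a⁻¹) * (b * b⁻¹)) := by
    refine ρ.trans (ρ.mul (ρ.symm h) (ρ.refl b⁻¹)) ?_
    have eq1 : a * b⁻¹ = (a * a⁻¹) * (a * b⁻¹) := by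
      rw [← mul_assoc, mul_inv_mul]
    rw [eq1]
    exact ρ.mul (ρ.refl _) (ρ.mul h (ρ.refl _))
  have A2 : ρ (a * a⁻¹) ((a * a⁻¹) * (b * b⁻¹)) := by
    rw [mul_inv_comm a]
    refine ρ.trans (ρ.mul (ρ.refl a⁻¹) h) ?_
    have eq2 : a⁻¹ * b = (a⁻¹ * b) * (b⁻¹ * b) := by
      rw [mul_assoc a⁻¹ b (b⁻¹ * b), ← mul_assoc b b⁻¹ b, mul_inv_mul]
    rw [eq2]
    refine ρ.trans (ρ.mul (ρ.mul (ρ.refl a⁻¹) (ρ.symm h)) (ρ.refl (b⁻¹ * b))) ?_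
    rw [← mul_inv_comm b]
    exact ρ.refl _
  have A : ρ (a * a⁻¹) (b * b⁻¹) := ρ.trans A2 (ρ.symm A1)
  have s1 : a⁻¹ = a⁻¹ * (a * a⁻¹) := by rw [← mul_assoc, inv_mul_inv]
  rw [s1]
  refine ρ.trans (ρ.mul (ρ.refl a⁻¹) A) ?_
  refine ρ.trans (ρ.mul (ρ.refl a⁻¹) (ρ.mul (ρ.symm h) (ρ.refl b⁻¹))) ?_
  have s2 : a⁻¹ * (a * b⁻¹) = (a * a⁻¹) * b⁻¹ := by
    rw [← mul_assoc, ← mul_inv_comm a]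
  rw [s2]
  refine ρ.trans (ρ.mul A (ρ.refl b⁻¹)) ?_
  have s3 : (b * b⁻¹) * b⁻¹ = b⁻¹ := by rw [mul_inv_comm b, inv_mul_inv]
  rw [s3]
  exact ρ.refl _

lemma idem_zero (b : S) : IsIdempotentElem (b * b⁻¹) := by
  show b * b⁻¹ * (b * b⁻¹) = b * b⁻¹
  rw [← mul_assoc, mul_inv_mul]

/-- For a congruence `ρ` on a completely regular semigroup,
`a ρ b` iff `a⁰ ρ b⁰` and `a * b⁻¹ ∈ ker ρ`. -/
theorem con_iff_idem_and_ker (ρ : Con S) (a b : S) :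
    ρ a b ↔ ρ (a * a⁻¹) (b * b⁻¹) ∧ a * b⁻¹ ∈ conKer ρ := by
  constructor
  · intro h
    exact ⟨ρ.mul h (con_inv ρ h), b * b⁻¹, idem_zero b, ρ.mul h (ρ.refl b⁻¹)⟩
  · rintro ⟨h1, e, he, h2⟩
    have huu : ρ ((a * b⁻¹) * (a * b⁻¹)) (a * b⁻¹) := by
      have hee : ρ (e * e) e := by rw [he.eq]; exact ρ.refl e
      exact ρ.trans (ρ.trans (ρ.mul h2 h2) hee) (ρ.symm h2)
    have huv : ρ ((a * b⁻¹) * (b * a⁻¹)) (a * a⁻¹) := by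
      have eq1 : (a * b⁻¹) * (b * a⁻¹) = a * ((b * b⁻¹) * a⁻¹) := by
        rw [mul_inv_comm b]; simp only [mul_assoc]
      rw [eq1]
      refine ρ.trans (ρ.mul (ρ.refl a) (ρ.mul (ρ.symm h1) (ρ.refl a⁻¹))) ?_
      have eq2 : a * ((a * a⁻¹) * a⁻¹) = a * a⁻¹ := by
        rw [mul_inv_comm a, inv_mul_inv]
        exact mul_inv_comm a
      rw [eq2]
      exact ρ.refl _
    have hua : ρ ((a * b⁻¹) * (a * a⁻¹)) (a * b⁻¹) := by
      refine ρ.trans (ρ.mul (ρ.refl (a * b⁻¹)) h1) ?_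
      have eq3 : (a * b⁻¹) * (b * b⁻¹) = a * b⁻¹ := by
        rw [mul_assoc a b⁻¹, ← mul_assoc b⁻¹ b b⁻¹, inv_mul_inv]
      rw [eq3]
      exact ρ.refl _
    have hu0 : ρ (a * b⁻¹) (a * a⁻¹) := by
      refine ρ.trans (ρ.symm hua) ?_
      refine ρ.trans (ρ.mul (ρ.refl (a * b⁻¹)) (ρ.symm huv)) ?_
      rw [← mul_assoc]
      exact ρ.trans (ρ.mul huu (ρ.refl (b * a⁻¹))) huv
    have c1 : a = a * (a * a⁻¹) := by
      rw [mul_inv_comm a, ← mul_assoc, mul_inv_mul]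
    have stepA : ρ a (a * (b * b⁻¹)) := by
      nth_rewrite 1 [c1]
      exact ρ.mul (ρ.refl a) h1
    refine ρ.trans stepA ?_
    have c2 : a * (b * b⁻¹) = (a * b⁻¹) * b := by
      rw [mul_inv_comm b, ← mul_assoc]
    rw [c2]
    refine ρ.trans (ρ.mul hu0 (ρ.refl b)) ?_
    refine ρ.trans (ρ.mul h1 (ρ.refl b)) ?_
    rw [mul_inv_mul]
    exact ρ.refl b
end

section
/- Let S be a completely regular semigroup in which there exists a congruence that is both idempotent separating and E-unitary. Then π_t = ε, where π is the least E-unitary congruence and π_t is the least congruence with the same trace as π. -/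
variable {S : Type*} [CompletelyRegularSemigroup S]

/-- A congruence is E-unitary if its quotient semigroup is E-unitary:
idempotents form a unitary subset. -/
def IsEUnitaryCon (θ : Con S) : Prop :=
  ∀ x y : θ.Quotient, IsIdempotentElem x →
    (IsIdempotentElem (x * y) → IsIdempotentElem y) ∧
    (IsIdempotentElem (y * x) → IsIdempotentElem y)

/-- If there exists an idempotent separating E-unitary congruence on `S`,
then `π_t = ε`, where `π` is the least E-unitary congruence and `π_t` the least
congruence with the same trace as `π`. -/
theorem pi_t_eq_bot (π πt : Con S)
    (hex : ∃ θ : Con S,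
      (∀ e f : S, IsIdempotentElem e → IsIdempotentElem f → θ e f → e = f) ∧
      IsEUnitaryCon θ)
    (hπ : IsEUnitaryCon π)
    (hπleast : ∀ θ : Con S, IsEUnitaryCon θ → π ≤ θ)
    (htr : ∀ e f : S, IsIdempotentElem e → IsIdempotentElem f → (πt e f ↔ π e f))
    (htleast : ∀ θ : Con S,
      (∀ e f : S, IsIdempotentElem e → IsIdempotentElem f → (θ e f ↔ π e f)) → πt ≤ θ) :
    ∀ a b : S, πt a b → a = b := by
  obtain ⟨θ, hsep, hEu⟩ := hex
  have hle : π ≤ θ := hπleast θ hEu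
  have hbot : ∀ e f : S, IsIdempotentElem e → IsIdempotentElem f →
      ((⊥ : Con S) e f ↔ π e f) := by
    intro e f he hf
    constructor
    · intro h
      have : e = f := h
      subst this; exact π.refl e
    · intro h
      exact hsep e f he hf (hle h)
  intro a b h
  exact htleast ⊥ hbot h
end

section
/- Let S be a completely regular semigroup that is a band of rectangular groups, i.e., each β-class containing an idempotent is a rectangular group, where β is the least band congruence. Then β ∩ F = β ∩ Θ, where F is defined by a F b iff ab⁻¹ is idempotent and Θ by a Θ b iff a⁰b = ab⁰. -/
variable {S : Type*} [CompletelyRegularSemigroup S]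

section Aux
open CompletelyRegularSemigroup

/-- `a⁰ = a * a⁻¹` is idempotent. -/
lemma crs_zero_idem (a : S) : IsIdempotentElem (a * a⁻¹) := by
  show (a * a⁻¹) * (a * a⁻¹) = a * a⁻¹
  calc (a * a⁻¹) * (a * a⁻¹) = a * (a⁻¹ * a * a⁻¹) := by
        simp only [mul_assoc]
    _ = a * a⁻¹ := by rw [inv_mul_inv]

/-- `a * a⁰ = a`. -/
lemma crs_mul_zero (a : S) : a * (a * a⁻¹) = a := by
  rw [mul_inv_comm, ← mul_assoc, mul_inv_mul]

/-- For any band congruence, `a⁻¹` is related to `a⁰`. -/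
lemma crs_beta_inv (β : Con S) (hband : ∀ a : S, β (a * a) a) (a : S) :
    β a⁻¹ (a * a⁻¹) := by
  have h := β.mul (β.refl a) (hband a⁻¹)
  have e : a * (a⁻¹ * a⁻¹) = a⁻¹ := by
    rw [← mul_assoc, mul_inv_comm, inv_mul_inv]
  rwa [e] at h

/-- For any band congruence, `a` is related to `a⁰`. -/
lemma crs_beta_zero (β : Con S) (hband : ∀ a : S, β (a * a) a) (a : S) :
    β a (a * a⁻¹) := by
  have h := β.mul (β.refl a) (crs_beta_inv β hband a)
  rw [crs_mul_zero] at h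
  exact β.symm h

end Aux

/-- If `S` is a band of rectangular groups (the idempotents of each `β`-class of an
idempotent form a rectangular band), then `β ∩ F = β ∩ Θ`. -/
theorem beta_inter_fRel_eq_beta_inter_thetaRel (β : Con S)
    (hband : ∀ a : S, β (a * a) a)
    (hleast : ∀ θ : Con S, (∀ a : S, θ (a * a) a) → β ≤ θ)
    (hrg : ∀ e f g : S, IsIdempotentElem e → IsIdempotentElem f → IsIdempotentElem g →
      β f e → β g e → IsIdempotentElem (f * g) ∧ f * g * f = f) :
    ∀ a b : S, (β a b ∧ fRel a b) ↔ (β a b ∧ thetaRel a b) := by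
  intro a b
  have hea : IsIdempotentElem (a * a⁻¹) := crs_zero_idem a
  have heb : IsIdempotentElem (b * b⁻¹) := crs_zero_idem b
  have hba0 : β a (a * a⁻¹) := crs_beta_zero β hband a
  have hbb0 : β b (b * b⁻¹) := crs_beta_zero β hband b
  -- algebraic simplifications
  have step1 : (a * b⁻¹) * (b * b⁻¹) = a * b⁻¹ := by
    have e : b⁻¹ * (b * b⁻¹) = b⁻¹ := by
      rw [← mul_assoc, CompletelyRegularSemigroup.inv_mul_inv]
    rw [mul_assoc, e]
  have step2 : (a * a⁻¹) * (a * b⁻¹) = a * b⁻¹ := by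
    rw [← mul_assoc, CompletelyRegularSemigroup.mul_inv_mul]
  -- sandwich lemma: for idempotents f, g, k all β-related to a⁰, f * g * k = f * k
  have sandwich : ∀ f g k : S, IsIdempotentElem f → IsIdempotentElem g → IsIdempotentElem k →
      β f (a * a⁻¹) → β g (a * a⁻¹) → β k (a * a⁻¹) → f * g * k = f * k := by
    intro f g k hf hg hk hbf hbg hbk
    obtain ⟨hgk, _⟩ := hrg (a * a⁻¹) g k hea hg hk hbg hbk
    have hbgk : β (g * k) (a * a⁻¹) := by
      have h := β.mul hbg hbk
      rwa [hea] at h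
    obtain ⟨_, hfgk⟩ := hrg (a * a⁻¹) f (g * k) hea hf hgk hbf hbgk
    obtain ⟨_, hkfk⟩ := hrg (a * a⁻¹) k f hea hk hf hbk hbf
    calc f * g * k = f * g * (k * f * k) := by rw [hkfk]
      _ = f * (g * k) * f * k := by simp only [mul_assoc]
      _ = f * k := by rw [hfgk]
  constructor
  · rintro ⟨hab, hf⟩
    refine ⟨hab, ?_⟩
    -- β-relations for the idempotents a*b⁻¹ and b*b⁻¹
    have hbb' : β b⁻¹ (a * a⁻¹) :=
      β.trans (β.trans (crs_beta_inv β hband b) (β.symm hbb0)) (β.trans (β.symm hab) hba0)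
    have hbh : β (a * b⁻¹) (a * a⁻¹) := by
      have h := β.mul (β.refl a) hbb'
      rw [crs_mul_zero] at h
      exact β.trans h hba0
    have hbb0' : β (b * b⁻¹) (a * a⁻¹) :=
      β.trans (β.symm hbb0) (β.trans (β.symm hab) hba0)
    -- key: a * b⁻¹ = a⁰ * b⁰
    have s := sandwich (a * a⁻¹) (a * b⁻¹) (b * b⁻¹) hea hf heb (β.refl _) hbh hbb0'
    rw [step2, step1] at s
    show (a * a⁻¹) * b = a * (b * b⁻¹)
    calc (a * a⁻¹) * b = (a * a⁻¹) * ((b * b⁻¹) * b) := by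
          rw [CompletelyRegularSemigroup.mul_inv_mul]
      _ = ((a * a⁻¹) * (b * b⁻¹)) * b := by simp only [mul_assoc]
      _ = (a * b⁻¹) * b := by rw [← s]
      _ = a * (b⁻¹ * b) := by rw [mul_assoc]
      _ = a * (b * b⁻¹) := by rw [← CompletelyRegularSemigroup.mul_inv_comm]
  · rintro ⟨hab, ht⟩
    refine ⟨hab, ?_⟩
    -- multiply Θ on the right by b⁻¹: a⁰ * b⁰ = a * b⁻¹
    have key : (a * a⁻¹) * (b * b⁻¹) = a * b⁻¹ := by
      have h := congrArg (· * b⁻¹) ht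
      have r : a * (b * b⁻¹) * b⁻¹ = a * b⁻¹ := by
        rw [mul_assoc, mul_assoc, ← mul_assoc b b⁻¹ b⁻¹,
          CompletelyRegularSemigroup.mul_inv_comm b, CompletelyRegularSemigroup.inv_mul_inv]
      rw [r, mul_assoc] at h
      exact h
    have hbb0' : β (b * b⁻¹) (a * a⁻¹) :=
      β.trans (β.symm hbb0) (β.trans (β.symm hab) hba0)
    have hi := (hrg (a * a⁻¹) (a * a⁻¹) (b * b⁻¹) hea hea heb (β.refl _) hbb0').1
    show IsIdempotentElem (a * b⁻¹)
    rw [← key]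
    exact hi
end

section
/- Let S be a completely regular semigroup and suppose the least cryptogroup congruence κ satisfies κ ⊆ F (i.e., κ-related elements a, b satisfy ab⁻¹ ∈ E(S)). Then for every idempotent e, the κ-class eκ is a rectangular band. -/
variable {S : Type*} [CompletelyRegularSemigroup S]

/-- A cryptogroup congruence: the quotient is a cryptogroup, equivalently the
identity `(ab)⁰ = (a⁰b⁰)⁰` holds in the quotient. -/
def IsCryptoCon (θ : Con S) : Prop :=
  ∀ a b : S, θ ((a * b) * (a * b)⁻¹)
    (((a * a⁻¹) * (b * b⁻¹)) * ((a * a⁻¹) * (b * b⁻¹))⁻¹)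

namespace CRRect

open CompletelyRegularSemigroup

lemma mim (a : S) : a * a⁻¹ * a = a := mul_inv_mul a
lemma imi (a : S) : a⁻¹ * a * a⁻¹ = a⁻¹ := inv_mul_inv a
lemma mic (a : S) : a * a⁻¹ = a⁻¹ * a := mul_inv_comm a

lemma mii (a : S) : a * a⁻¹ * a⁻¹ = a⁻¹ := by rw [mic, imi]
lemma iim (a : S) : a⁻¹ * a⁻¹ * a = a⁻¹ := by rw [mul_assoc, ← mic, ← mul_assoc, imi]
lemma iaa (a : S) : a⁻¹ * a * a = a := by rw [← mic, mim]
lemma aai (a : S) : a * (a * a⁻¹) = a := by rw [mic, ← mul_assoc, mim]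
lemma mim' (a : S) : a * (a⁻¹ * a) = a := by rw [← mul_assoc, mim]
lemma e0_idem (a : S) : (a * a⁻¹) * (a * a⁻¹) = a * a⁻¹ := by rw [← mul_assoc, mim]

lemma inv_unique {a x : S} (h1 : a * x * a = a) (h2 : x * a * x = x)
    (h3 : a * x = x * a) : x = a⁻¹ := by
  have key : a * x = a * a⁻¹ := by
    have e1 : (x * a) * (a⁻¹ * a) = x * a := by
      rw [mul_assoc, mim']
    have e2 : (a * x) * (a * a⁻¹) = a * a⁻¹ := by
      rw [← mul_assoc, mul_assoc a x a, ← mul_assoc, h1]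
    rw [← h3, ← mic] at e1
    rw [e2] at e1
    exact e1.symm
  calc x = x * a * x := h2.symm
    _ = x * (a * x) := mul_assoc _ _ _
    _ = x * (a * a⁻¹) := by rw [key]
    _ = (x * a) * a⁻¹ := (mul_assoc _ _ _).symm
    _ = (a * x) * a⁻¹ := by rw [h3]
    _ = (a * a⁻¹) * a⁻¹ := by rw [key]
    _ = a⁻¹ := mii a

lemma idem_inv {e : S} (he : e * e = e) : e⁻¹ = e :=
  (inv_unique (by rw [he, he]) (by rw [he, he]) rfl).symm

lemma sq_inv (a : S) : (a * a)⁻¹ = a⁻¹ * a⁻¹ := by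
  have c1 : (a * a) * (a⁻¹ * a⁻¹) = a * a⁻¹ := by
    rw [mul_assoc, ← mul_assoc a a⁻¹ a⁻¹, mii]
  have c2 : (a⁻¹ * a⁻¹) * (a * a) = a * a⁻¹ := by
    rw [mul_assoc, ← mul_assoc a⁻¹ a a, iaa, ← mic]
  have h1 : (a * a) * (a⁻¹ * a⁻¹) * (a * a) = a * a := by
    rw [c1, ← mul_assoc, mim]
  have h2 : (a⁻¹ * a⁻¹) * (a * a) * (a⁻¹ * a⁻¹) = a⁻¹ * a⁻¹ := by
    rw [c2, ← mul_assoc, mii]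
  exact (inv_unique h1 h2 (c1.trans c2.symm)).symm

/-- elements κ-related to an idempotent are idempotent, given κ ⊆ F -/
lemma ker_idem {κ : Con S} (hF : ∀ a b : S, κ a b → IsIdempotentElem (a * b⁻¹))
    {a e : S} (he : IsIdempotentElem e) (h : κ a e) : IsIdempotentElem a := by
  have h2 : κ (a * a) e := by
    have := κ.mul h h
    rwa [he.eq] at this
  have h4 := hF a (a * a) (κ.trans h (κ.symm h2))
  rw [sq_inv, ← mul_assoc, mii] at h4
  -- h4 : IsIdempotentElem a⁻¹, i.e. a⁻¹ * a⁻¹ = a⁻¹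
  have h5 : a = a * a⁻¹ := by
    calc a = a * a⁻¹ * a := (mim a).symm
      _ = a * (a⁻¹ * a⁻¹) * a := by rw [h4.eq]
      _ = (a * a⁻¹) * (a⁻¹ * a) := by simp only [mul_assoc]
      _ = (a * a⁻¹) * (a * a⁻¹) := by rw [← mic]
      _ = a * a⁻¹ := e0_idem a
  show a * a = a
  nth_rewrite 2 [h5]
  exact aai a

/-- Divisibility: `b` divides `a`. -/
def Dvd' (a b : S) : Prop := ∃ u v : S, a = u * b * v

lemma dvd'_refl (a : S) : Dvd' a a := ⟨a * a⁻¹, a * a⁻¹, by rw [mim, aai]⟩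

lemma dvd'_trans {a b c : S} : Dvd' a b → Dvd' b c → Dvd' a c :=
  fun ⟨u, v, h⟩ ⟨p, q, h'⟩ => ⟨u * p, q * v, by rw [h, h']; simp only [mul_assoc]⟩

lemma dvd'_left (a b : S) : Dvd' (a * b) a :=
  ⟨(a * b) * (a * b)⁻¹, b, by rw [mul_assoc (a * b * (a * b)⁻¹) a b, mim]⟩

lemma dvd'_right (a b : S) : Dvd' (a * b) b :=
  ⟨a, b * b⁻¹, by simp only [mul_assoc]; rw [aai]⟩

lemma dvd'_sq (a : S) : Dvd' a (a * a) :=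
  ⟨a⁻¹, a * a⁻¹, by simp only [mul_assoc]; rw [aai, ← mul_assoc, ← mic, mim]⟩

lemma dvd'_comm (a b : S) : Dvd' (a * b) (b * a) :=
  dvd'_trans (dvd'_sq _) ⟨a, b, by simp only [mul_assoc]⟩

lemma dvd'_mul {z x y : S} (hx : Dvd' z x) (hy : Dvd' z y) : Dvd' z (x * y) := by
  obtain ⟨s, t, hs⟩ := hx
  obtain ⟨p, q, hp⟩ := hy
  have h1 : Dvd' (z * z) (x * (t * p) * y) := by
    refine ⟨s, q, ?_⟩
    nth_rewrite 1 [hs]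
    nth_rewrite 1 [hp]
    simp only [mul_assoc]
  have c1 : Dvd' (x * (t * p) * y) (y * (x * (t * p))) := dvd'_comm (x * (t * p)) y
  have c2 : Dvd' (y * (x * (t * p))) (y * x) :=
    mul_assoc y x (t * p) ▸ dvd'_left (y * x) (t * p)
  have c3 : Dvd' (y * x) (x * y) := dvd'_comm y x
  exact dvd'_trans (dvd'_sq z)
    (dvd'_trans h1 (dvd'_trans c1 (dvd'_trans c2 c3)))

/-- The J-equivalence (mutual divisibility) congruence. -/
def etaCon : Con S where
  r a b := Dvd' a b ∧ Dvd' b a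
  iseqv :=
    { refl := fun a => ⟨dvd'_refl a, dvd'_refl a⟩
      symm := fun h => ⟨h.2, h.1⟩
      trans := fun h1 h2 => ⟨dvd'_trans h1.1 h2.1, dvd'_trans h2.2 h1.2⟩ }
  mul' := fun {w x y z} h1 h2 =>
    ⟨dvd'_mul (dvd'_trans (dvd'_left w y) h1.1) (dvd'_trans (dvd'_right w y) h2.1),
     dvd'_mul (dvd'_trans (dvd'_left x z) h1.2) (dvd'_trans (dvd'_right x z) h2.2)⟩

lemma eta_nat (x : S) : (etaCon : Con S) x (x * x⁻¹) :=
  ⟨⟨x * x⁻¹, x, by rw [e0_idem, mim]⟩, ⟨x * x⁻¹, x⁻¹, by rw [mim]⟩⟩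

lemma etaCrypto : IsCryptoCon (etaCon (S := S)) := by
  intro a b
  have n1 : (etaCon : Con S) ((a * b) * (a * b)⁻¹) (a * b) := etaCon.symm (eta_nat (a * b))
  have n2 : (etaCon : Con S) (a * b) ((a * a⁻¹) * (b * b⁻¹)) :=
    etaCon.mul (eta_nat a) (eta_nat b)
  exact etaCon.trans (etaCon.trans n1 n2) (eta_nat _)

lemma rect_core {e g s t : S} (hge : g * e = g) (hes : e * s = s) (hgt : g * t = t)
    (hse : s * e = s) (het : e * t = t) (hE : s * t = e) : e = g := by
  have hq1 : (s * s⁻¹) * e = e := by rw [← hE, ← mul_assoc, mim]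
  have hq2 : (s * s⁻¹) * (t * s) = s * s⁻¹ := by
    rw [mic, mul_assoc, ← mul_assoc s t s, hE, hes]
  have hue : (t * s) * e = t * s := by rw [mul_assoc, hse]
  have heu : e * (t * s) = t * s := by rw [← mul_assoc, het]
  have heq : e = s * s⁻¹ := by
    calc e = (s * s⁻¹) * e := hq1.symm
      _ = ((s * s⁻¹) * (t * s)) * e := by rw [hq2]
      _ = (s * s⁻¹) * ((t * s) * e) := mul_assoc _ _ _
      _ = (s * s⁻¹) * (t * s) := by rw [hue]
      _ = s * s⁻¹ := hq2
  have hu : t * s = e := by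
    calc t * s = e * (t * s) := heu.symm
      _ = (s * s⁻¹) * (t * s) := by rw [← heq]
      _ = s * s⁻¹ := hq2
      _ = e := heq.symm
  have hfin : g * e = e := by rw [← hu, ← mul_assoc, hgt]
  exact hfin.symm.trans hge

lemma rect_key {e g : S} (he : e * e = e) (hg : g * g = g) (hge : g * e = g)
    (heg : e * g = g) {s t : S} (hst : e = s * g * t) : e = g := by
  have hg1 : ∀ x : S, g * (g * x) = g * x := fun x => by rw [← mul_assoc, hg]
  have he1 : ∀ x : S, e * (e * x) = e * x := fun x => by rw [← mul_assoc, he]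
  have hst1 : ∀ x : S, s * (g * (t * x)) = e * x := fun x => by
    rw [← mul_assoc, ← mul_assoc, ← hst]
  refine rect_core (s := e * (s * g)) (t := g * (t * e)) hge ?_ ?_ ?_ ?_ ?_
  · exact he1 _
  · exact hg1 _
  · show (e * (s * g)) * e = e * (s * g)
    simp only [mul_assoc]; rw [hge]
  · show e * (g * (t * e)) = g * (t * e)
    rw [← mul_assoc, heg]
  · show (e * (s * g)) * (g * (t * e)) = e
    simp only [mul_assoc]
    rw [hg1, hst1, he, he]

end CRRect

/-- If the least cryptogroup congruence `κ` satisfies `κ ⊆ F`, then each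
`κ`-class of an idempotent is a rectangular band. -/
theorem kappa_over_rect_bands (κ : Con S)
    (hκ : IsCryptoCon κ) (hκleast : ∀ θ : Con S, IsCryptoCon θ → κ ≤ θ)
    (hF : ∀ a b : S, κ a b → IsIdempotentElem (a * b⁻¹)) :
    ∀ e : S, IsIdempotentElem e → ∀ a b : S, κ a e → κ b e →
      IsIdempotentElem a ∧ a * b * a = a := by
  intro e he a b ha hb
  have hae : IsIdempotentElem a := CRRect.ker_idem hF he ha
  have hg3 : κ (a * b * a) e := by
    have h' := κ.mul (κ.mul ha hb) ha
    rwa [he.eq, he.eq] at h'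
  have hg : IsIdempotentElem (a * b * a) := CRRect.ker_idem hF he hg3
  have hη : (CRRect.etaCon : Con S) a (a * b * a) :=
    hκleast CRRect.etaCon CRRect.etaCrypto (κ.trans ha (κ.symm hg3))
  obtain ⟨s, t, hst⟩ := hη.1
  have hga : (a * b * a) * a = a * b * a := by
    rw [mul_assoc (a * b) a a, hae.eq]
  have hag : a * (a * b * a) = a * b * a := by
    rw [← mul_assoc, ← mul_assoc, hae.eq]
  exact ⟨hae, (CRRect.rect_key hae.eq hg.eq hga hag hst).symm⟩
end

section
/- Let S be an orthodox completely regular semigroup (orthogroup) and ρ a congruence on S. Then ρ_t, the least congruence with the same trace as ρ, equals (ρ ∩ F)*, the congruence generated by ρ ∩ F, where a F b iff ab⁻¹ ∈ E(S). -/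
variable {S : Type*} [CompletelyRegularSemigroup S]

def IsCommInverse {M : Type*} [Mul M] (x y : M) : Prop :=
  x * y * x = x ∧ y * x * y = y ∧ x * y = y * x

theorem IsCommInverse.unique {M : Type*} [Semigroup M] {x y z : M}
    (hy : IsCommInverse x y) (hz : IsCommInverse x z) : y = z := by
  obtain ⟨hxyx, hyxy, hcy⟩ := hy
  obtain ⟨hxzx, hzxz, hcz⟩ := hz
  have hxy_xz : x * y = x * z :=
    calc x * y = y * x := hcy
      _ = y * (x * z * x) := by rw [hxzx]
      _ = (y * x) * (z * x) := by simp only [mul_assoc]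
      _ = (x * y) * (x * z) := by rw [hcy, hcz]
      _ = x * y * x * z := by simp only [mul_assoc]
      _ = x * z := by rw [hxyx]
  calc y = y * (x * y) := by rw [← mul_assoc, hyxy]
    _ = y * (x * z) := by rw [hxy_xz]
    _ = (x * y) * z := by rw [← mul_assoc, hcy]
    _ = z := by rw [hxy_xz, hcz, hzxz]

namespace CompletelyRegularSemigroup

theorem mul_mul_inv_self (a : S) : a * (a * a⁻¹) = a := by
  rw [mul_inv_comm, ← mul_assoc, mul_inv_mul]

theorem isIdempotentElem_mul_inv (a : S) : IsIdempotentElem (a * a⁻¹) := by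
  rw [IsIdempotentElem, ← mul_assoc, mul_inv_mul]

theorem isCommInverse_inv (a : S) : IsCommInverse a a⁻¹ :=
  ⟨mul_inv_mul a, inv_mul_inv a, mul_inv_comm a⟩

theorem _root_.IsIdempotentElem.inv_eq {e : S} (he : IsIdempotentElem e) : e⁻¹ = e :=
  (isCommInverse_inv e).unique ⟨by rw [he.eq, he.eq], by rw [he.eq, he.eq], rfl⟩

theorem fRel_of_isIdempotentElem
    (hortho : ∀ e f : S, IsIdempotentElem e → IsIdempotentElem f → IsIdempotentElem (e * f))
    {e f : S} (he : IsIdempotentElem e) (hf : IsIdempotentElem f) : fRel e f := by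
  rw [fRel, hf.inv_eq]
  exact hortho e f he hf

theorem _root_.Con.inv_rel (c : Con S) {a b : S} (h : c a b) : c a⁻¹ b⁻¹ := by
  have hinv (x : S) : IsCommInverse (x : c.Quotient) (x⁻¹ : S) := by
    obtain ⟨h₁, h₂, h₃⟩ := isCommInverse_inv x
    simp only [IsCommInverse, ← Con.coe_mul]
    exact ⟨congrArg _ h₁, congrArg _ h₂, congrArg _ h₃⟩
  have hb := hinv b
  rw [← c.eq.2 h] at hb
  exact c.eq.1 ((hinv a).unique hb)

theorem _root_.Con.rel_of_rel_mul_inv (c : Con S) {a b : S}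
    (h₀ : c (a * a⁻¹) (b * b⁻¹)) (hF : c (a * b⁻¹) (b * b⁻¹)) : c a b := by
  have hab : c (a * (a * a⁻¹)) (a * (b * b⁻¹)) := c.mul (c.refl a) h₀
  have hbb : c (a * b⁻¹ * b) (b * b⁻¹ * b) := c.mul hF (c.refl b)
  rw [mul_mul_inv_self] at hab
  rw [mul_inv_mul, mul_assoc, ← mul_inv_comm] at hbb
  exact c.trans hab hbb

end CompletelyRegularSemigroup

open CompletelyRegularSemigroup

/-- On an orthogroup, `ρ_t` (the least congruence with the same trace as `ρ`)
equals the congruence generated by `ρ ∩ F`. -/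
theorem rho_t_eq_conGen (hortho : ∀ e f : S, IsIdempotentElem e → IsIdempotentElem f →
      IsIdempotentElem (e * f))
    (ρ ρt : Con S)
    (htr : ∀ e f : S, IsIdempotentElem e → IsIdempotentElem f → (ρt e f ↔ ρ e f))
    (htleast : ∀ θ : Con S,
      (∀ e f : S, IsIdempotentElem e → IsIdempotentElem f → (θ e f ↔ ρ e f)) → ρt ≤ θ) :
    ρt = conGen (fun a b => ρ a b ∧ fRel a b) := by
  have hle : conGen (fun a b => ρ a b ∧ fRel a b) ≤ ρ := Con.conGen_le.2 fun _ _ h => h.1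
  apply le_antisymm
  · exact htleast _ fun e f he hf =>
      ⟨(hle ·), fun h => ConGen.Rel.of e f ⟨h, fRel_of_isIdempotentElem hortho he hf⟩⟩
  · refine Con.conGen_le.2 fun a b ⟨hab, hF⟩ => ρt.rel_of_rel_mul_inv ?_ ?_
    · exact (htr _ _ (isIdempotentElem_mul_inv a) (isIdempotentElem_mul_inv b)).2
        (ρ.mul hab (ρ.inv_rel hab))
    · exact (htr _ _ hF (isIdempotentElem_mul_inv b)).2 (ρ.mul hab (ρ.refl b⁻¹))
end

section
/- A completely regular semigroup S is orthodox if and only if there exists an idempotent pure Clifford congruence on S. -/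
variable {S : Type*} [CompletelyRegularSemigroup S]

/-- A Clifford congruence: the quotient is a Clifford semigroup, i.e. every
idempotent of the quotient is central. -/
def IsCliffordCon (θ : Con S) : Prop :=
  ∀ x a : S, θ (x * x) x → θ (x * a) (a * x)

namespace OrthodoxProof

/-! ### Basic identities in a completely regular semigroup -/

lemma m1 (a : S) : a * a⁻¹ * a = a := CompletelyRegularSemigroup.mul_inv_mul a
lemma m2 (a : S) : a⁻¹ * a * a⁻¹ = a⁻¹ := CompletelyRegularSemigroup.inv_mul_inv a
lemma m3 (a : S) : a * a⁻¹ = a⁻¹ * a := CompletelyRegularSemigroup.mul_inv_comm a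

lemma oE (a : S) : IsIdempotentElem (a * a⁻¹) := by
  show (a * a⁻¹) * (a * a⁻¹) = a * a⁻¹
  rw [← mul_assoc, m1]

lemma hco (a : S) : a * (a⁻¹ * a) = a := by rw [← mul_assoc, m1]
lemma hoc (a : S) : a * (a * a⁻¹) = a := by rw [m3]; exact hco a
lemma e_bab (a : S) : a⁻¹ * (a * a⁻¹) = a⁻¹ := by rw [← mul_assoc, m2]
lemma hob (a : S) : (a * a⁻¹) * a⁻¹ = a⁻¹ := by rw [m3]; exact m2 a
lemma hba (a : S) : (a⁻¹ * a) * a = a := by rw [← m3]; exact m1 a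
lemma hbb (a : S) : a⁻¹ * (a⁻¹ * a) = a⁻¹ := by rw [← m3]; exact e_bab a

/-! ### Tail-form rewrite rules (for `simp` on right-associated products) -/

lemma w_aba (a W : S) : a * (a⁻¹ * (a * W)) = a * W := by
  rw [← mul_assoc, ← mul_assoc, m1]
lemma e_aba (a : S) : a * (a⁻¹ * a) = a := hco a
lemma w_bab (a W : S) : a⁻¹ * (a * (a⁻¹ * W)) = a⁻¹ * W := by
  rw [← mul_assoc, ← mul_assoc, m2]
lemma w_abb (a W : S) : a * (a⁻¹ * (a⁻¹ * W)) = a⁻¹ * W := by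
  rw [← mul_assoc, ← mul_assoc, hob]
lemma e_abb (a : S) : a * (a⁻¹ * a⁻¹) = a⁻¹ := by rw [← mul_assoc, hob]
lemma w_baa (a W : S) : a⁻¹ * (a * (a * W)) = a * W := by
  rw [← mul_assoc, ← mul_assoc, hba]
lemma e_baa (a : S) : a⁻¹ * (a * a) = a := by rw [← mul_assoc, hba]
lemma w_aab (a W : S) : a * (a * (a⁻¹ * W)) = a * W := by
  rw [← mul_assoc, ← mul_assoc, mul_assoc a a, hoc]
lemma e_aab (a : S) : a * (a * a⁻¹) = a := hoc a
lemma w_bba (a W : S) : a⁻¹ * (a⁻¹ * (a * W)) = a⁻¹ * W := by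
  rw [← mul_assoc, ← mul_assoc, mul_assoc a⁻¹ a⁻¹, hbb]
lemma e_bba (a : S) : a⁻¹ * (a⁻¹ * a) = a⁻¹ := hbb a
lemma w_ba (a W : S) : a⁻¹ * (a * W) = a * (a⁻¹ * W) := by
  rw [← mul_assoc, ← mul_assoc, ← m3]
lemma e_ba (a : S) : a⁻¹ * a = a * a⁻¹ := (m3 a).symm
lemma w_ee {e : S} (he : IsIdempotentElem e) (W : S) : e * (e * W) = e * W := by
  rw [← mul_assoc, he.eq]
lemma w_sq_o (a W : S) : a * (a⁻¹ * (a * (a⁻¹ * W))) = a * (a⁻¹ * W) := by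
  have h := congrArg (· * W) (oE a).eq
  simpa only [mul_assoc] using h
lemma e_sq_o (a : S) : a * (a⁻¹ * (a * a⁻¹)) = a * a⁻¹ := by
  simpa only [mul_assoc] using (oE a).eq

section Orthodox
variable (hE : ∀ e f : S, IsIdempotentElem e → IsIdempotentElem f → IsIdempotentElem (e * f))
include hE

lemma w_sq_oe (a : S) {e : S} (he : IsIdempotentElem e) (W : S) :
    a * (a⁻¹ * (e * (a * (a⁻¹ * (e * W))))) = a * (a⁻¹ * (e * W)) := by
  have h := congrArg (· * W) (hE _ _ (oE a) he).eq
  simpa only [mul_assoc] using h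
lemma e_sq_oe (a : S) {e : S} (he : IsIdempotentElem e) :
    a * (a⁻¹ * (e * (a * (a⁻¹ * e)))) = a * (a⁻¹ * e) := by
  simpa only [mul_assoc] using (hE _ _ (oE a) he).eq
lemma w_sq_eo (a : S) {e : S} (he : IsIdempotentElem e) (W : S) :
    e * (a * (a⁻¹ * (e * (a * (a⁻¹ * W))))) = e * (a * (a⁻¹ * W)) := by
  have h := congrArg (· * W) (hE _ _ he (oE a)).eq
  simpa only [mul_assoc] using h
lemma e_sq_eo (a : S) {e : S} (he : IsIdempotentElem e) :
    e * (a * (a⁻¹ * (e * (a * a⁻¹)))) = e * (a * a⁻¹) := by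
  simpa only [mul_assoc] using (hE _ _ he (oE a)).eq

/-- `u * e * (a*a⁻¹) * e = u * e` whenever `u * (a*a⁻¹) = u`. -/
lemma gx2 (a : S) {e : S} (he : IsIdempotentElem e) {u : S} (hu : u * (a * a⁻¹) = u) :
    u * e * (a * a⁻¹) * e = u * e := by
  have hg : ((a * a⁻¹) * e) * ((a * a⁻¹) * e) = (a * a⁻¹) * e := (hE _ _ (oE a) he).eq
  calc u * e * (a * a⁻¹) * e
      = u * (((a * a⁻¹) * e) * ((a * a⁻¹) * e)) := by
        conv_lhs => rw [← hu]
        simp only [mul_assoc]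
    _ = u * ((a * a⁻¹) * e) := by rw [hg]
    _ = u * e := by rw [← mul_assoc, hu]

/-- `e * (a*a⁻¹) * e * u = e * u` whenever `(a*a⁻¹) * u = u`. -/
lemma gx2' (a : S) {e : S} (he : IsIdempotentElem e) {u : S} (hu : (a * a⁻¹) * u = u) :
    e * (a * a⁻¹) * e * u = e * u := by
  have hg : (e * (a * a⁻¹)) * (e * (a * a⁻¹)) = e * (a * a⁻¹) := (hE _ _ he (oE a)).eq
  calc e * (a * a⁻¹) * e * u
      = (e * (a * a⁻¹)) * ((e * (a * a⁻¹)) * u) := by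
        conv_lhs => rw [← hu]
        simp only [mul_assoc]
    _ = ((e * (a * a⁻¹)) * (e * (a * a⁻¹))) * u := (mul_assoc _ _ _).symm
    _ = (e * (a * a⁻¹)) * u := by rw [hg]
    _ = e * u := by rw [mul_assoc, hu]

lemma w_x2a (a : S) {e : S} (he : IsIdempotentElem e) (W : S) :
    a * (e * (a * (a⁻¹ * (e * W)))) = a * (e * W) := by
  have h := congrArg (· * W) (gx2 hE a he (hoc a))
  simpa only [mul_assoc] using h
lemma e_x2a (a : S) {e : S} (he : IsIdempotentElem e) :
    a * (e * (a * (a⁻¹ * e))) = a * e := by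
  simpa only [mul_assoc] using gx2 hE a he (hoc a)
lemma w_x2b (a : S) {e : S} (he : IsIdempotentElem e) (W : S) :
    a⁻¹ * (e * (a * (a⁻¹ * (e * W)))) = a⁻¹ * (e * W) := by
  have h := congrArg (· * W) (gx2 hE a he (e_bab a))
  simpa only [mul_assoc] using h
lemma e_x2b (a : S) {e : S} (he : IsIdempotentElem e) :
    a⁻¹ * (e * (a * (a⁻¹ * e))) = a⁻¹ * e := by
  simpa only [mul_assoc] using gx2 hE a he (e_bab a)
lemma w_x1a (a : S) {e : S} (he : IsIdempotentElem e) (W : S) :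
    e * (a * (a⁻¹ * (e * (a * W)))) = e * (a * W) := by
  have h := congrArg (· * W) (gx2' hE a he (m1 a))
  simpa only [mul_assoc] using h
lemma e_x1a (a : S) {e : S} (he : IsIdempotentElem e) :
    e * (a * (a⁻¹ * (e * a))) = e * a := by
  simpa only [mul_assoc] using gx2' hE a he (m1 a)
lemma w_x1b (a : S) {e : S} (he : IsIdempotentElem e) (W : S) :
    e * (a * (a⁻¹ * (e * (a⁻¹ * W)))) = e * (a⁻¹ * W) := by
  have h := congrArg (· * W) (gx2' hE a he (hob a))
  simpa only [mul_assoc] using h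
lemma e_x1b (a : S) {e : S} (he : IsIdempotentElem e) :
    e * (a * (a⁻¹ * (e * a⁻¹))) = e * a⁻¹ := by
  simpa only [mul_assoc] using gx2' hE a he (hob a)

/-- If `e` is idempotent and `e*d = d` then `c*e*(c*c⁻¹)*d = c*d`. -/
lemma sl1 {c d e : S} (he : IsIdempotentElem e) (hed : e * d = d) :
    c * (e * ((c * c⁻¹) * d)) = c * d := by
  have hg : ((c * c⁻¹) * e) * ((c * c⁻¹) * e) = (c * c⁻¹) * e := (hE _ _ (oE c) he).eq
  calc c * (e * ((c * c⁻¹) * d))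
      = c * (e * ((c * c⁻¹) * (e * d))) := by rw [hed]
    _ = (c * (c * c⁻¹)) * (e * ((c * c⁻¹) * (e * d))) := by rw [hoc c]
    _ = c * ((((c * c⁻¹) * e) * ((c * c⁻¹) * e)) * d) := by simp only [mul_assoc]
    _ = c * (((c * c⁻¹) * e) * d) := by rw [hg]
    _ = (c * (c * c⁻¹)) * (e * d) := by simp only [mul_assoc]
    _ = c * (e * d) := by rw [hoc c]
    _ = c * d := by rw [hed]

/-- If `e` is idempotent and `x*e = x` then `x*(c*c⁻¹)*e*c⁻¹ = x*c⁻¹`. -/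
lemma sl1b {c x e : S} (he : IsIdempotentElem e) (hxe : x * e = x) :
    x * ((c * c⁻¹) * (e * c⁻¹)) = x * c⁻¹ := by
  have hg : (e * (c * c⁻¹)) * (e * (c * c⁻¹)) = e * (c * c⁻¹) := (hE _ _ he (oE c)).eq
  calc x * ((c * c⁻¹) * (e * c⁻¹))
      = (x * e) * ((c * c⁻¹) * (e * c⁻¹)) := by rw [hxe]
    _ = (x * e) * ((c * c⁻¹) * (e * ((c * c⁻¹) * c⁻¹))) := by rw [hob c]
    _ = x * ((e * (c * c⁻¹)) * ((e * (c * c⁻¹)) * c⁻¹)) := by simp only [mul_assoc]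
    _ = x * (((e * (c * c⁻¹)) * (e * (c * c⁻¹))) * c⁻¹) := by
        rw [← mul_assoc (e * (c * c⁻¹))]
    _ = x * ((e * (c * c⁻¹)) * c⁻¹) := by rw [hg]
    _ = (x * e) * ((c * c⁻¹) * c⁻¹) := by simp only [mul_assoc]
    _ = x * c⁻¹ := by rw [hob c, hxe]

/-- If `f` is idempotent and `d*f = d` then `d*(c*c⁻¹)*f*c = d*c`. -/
lemma sl2 {c d f : S} (hf : IsIdempotentElem f) (hdf : d * f = d) :
    d * ((c * c⁻¹) * (f * c)) = d * c := by
  have hg : (f * (c * c⁻¹)) * (f * (c * c⁻¹)) = f * (c * c⁻¹) := (hE _ _ hf (oE c)).eq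
  calc d * ((c * c⁻¹) * (f * c))
      = (d * f) * ((c * c⁻¹) * (f * c)) := by rw [hdf]
    _ = (d * f) * ((c * c⁻¹) * (f * ((c * c⁻¹) * c))) := by rw [m1 c]
    _ = d * ((f * (c * c⁻¹)) * ((f * (c * c⁻¹)) * c)) := by simp only [mul_assoc]
    _ = d * (((f * (c * c⁻¹)) * (f * (c * c⁻¹))) * c) := by
        rw [← mul_assoc (f * (c * c⁻¹))]
    _ = d * ((f * (c * c⁻¹)) * c) := by rw [hg]
    _ = (d * f) * ((c * c⁻¹) * c) := by simp only [mul_assoc]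
    _ = d * c := by rw [m1 c, hdf]

/-- If `f` is idempotent and `f*x = x` then `c⁻¹*f*(c*c⁻¹)*x = c⁻¹*x`. -/
lemma sl2b {c x f : S} (hf : IsIdempotentElem f) (hfx : f * x = x) :
    c⁻¹ * (f * ((c * c⁻¹) * x)) = c⁻¹ * x := by
  have hg : ((c * c⁻¹) * f) * ((c * c⁻¹) * f) = (c * c⁻¹) * f := (hE _ _ (oE c) hf).eq
  calc c⁻¹ * (f * ((c * c⁻¹) * x))
      = c⁻¹ * (f * ((c * c⁻¹) * (f * x))) := by rw [hfx]
    _ = (c⁻¹ * (c * c⁻¹)) * (f * ((c * c⁻¹) * (f * x))) := by rw [e_bab c]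
    _ = c⁻¹ * (((c * c⁻¹) * f) * (((c * c⁻¹) * f) * x)) := by simp only [mul_assoc]
    _ = c⁻¹ * ((((c * c⁻¹) * f) * ((c * c⁻¹) * f)) * x) := by
        rw [← mul_assoc ((c * c⁻¹) * f)]
    _ = c⁻¹ * (((c * c⁻¹) * f) * x) := by rw [hg]
    _ = (c⁻¹ * (c * c⁻¹)) * (f * x) := by simp only [mul_assoc]
    _ = c⁻¹ * x := by rw [e_bab c, hfx]

lemma keyL1 {p x : S} (c : S) (h1 : p * x * p = p) (h2 : x * p * x = x) :
    (c * p) * (x * c⁻¹) * (c * p) = c * p := by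
  have hpx : IsIdempotentElem (p * x) := by
    show (p * x) * (p * x) = p * x
    rw [← mul_assoc, h1]
  calc (c * p) * (x * c⁻¹) * (c * p)
      = c * ((p * x) * ((c * c⁻¹) * p)) := by simp only [mul_assoc, w_ba c]
    _ = c * p := sl1 hE hpx h1

lemma keyL2 {p x : S} (c : S) (h1 : p * x * p = p) (h2 : x * p * x = x) :
    (x * c⁻¹) * (c * p) * (x * c⁻¹) = x * c⁻¹ := by
  have hpx : IsIdempotentElem (p * x) := by
    show (p * x) * (p * x) = p * x
    rw [← mul_assoc, h1]
  have hxe : x * (p * x) = x := by rw [← mul_assoc, h2]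
  calc (x * c⁻¹) * (c * p) * (x * c⁻¹)
      = x * ((c * c⁻¹) * ((p * x) * c⁻¹)) := by simp only [mul_assoc, w_ba c]
    _ = x * c⁻¹ := sl1b hE hpx hxe

lemma keyR1 {p x : S} (c : S) (h1 : p * x * p = p) (h2 : x * p * x = x) :
    (p * c) * (c⁻¹ * x) * (p * c) = p * c := by
  have hxp : IsIdempotentElem (x * p) := by
    show (x * p) * (x * p) = x * p
    rw [← mul_assoc, h2]
  have hpf : p * (x * p) = p := by rw [← mul_assoc, h1]
  calc (p * c) * (c⁻¹ * x) * (p * c)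
      = p * ((c * c⁻¹) * ((x * p) * c)) := by simp only [mul_assoc, w_ba c]
    _ = p * c := sl2 hE hxp hpf

lemma keyR2 {p x : S} (c : S) (h1 : p * x * p = p) (h2 : x * p * x = x) :
    (c⁻¹ * x) * (p * c) * (c⁻¹ * x) = c⁻¹ * x := by
  have hxp : IsIdempotentElem (x * p) := by
    show (x * p) * (x * p) = x * p
    rw [← mul_assoc, h2]
  calc (c⁻¹ * x) * (p * c) * (c⁻¹ * x)
      = c⁻¹ * ((x * p) * ((c * c⁻¹) * x)) := by simp only [mul_assoc, w_ba c]
    _ = c⁻¹ * x := sl2b hE hxp h2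

/-- In an orthodox completely regular semigroup, if `d*e*d = d` with `e` idempotent
then `d` is idempotent. -/
lemma lemA (d : S) {e : S} (he : IsIdempotentElem e) (h : d * e * d = d) :
    IsIdempotentElem d := by
  have h1 : d * ((d * d⁻¹) * e * (d * d⁻¹)) = d * d⁻¹ := by
    have h1' : d * ((d * d⁻¹) * e * (d * d⁻¹)) = (d * e * d) * d⁻¹ := by
      simp only [mul_assoc, w_aab d]
    rw [h1', h]
  have h3 : (d * d⁻¹) * ((d * d⁻¹) * e * (d * d⁻¹)) = (d * d⁻¹) * e * (d * d⁻¹) := by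
    simp only [mul_assoc, w_sq_o d]
  have h2 : d⁻¹ = (d * d⁻¹) * e * (d * d⁻¹) := by
    calc d⁻¹ = d⁻¹ * (d * d⁻¹) := (e_bab d).symm
      _ = d⁻¹ * (d * ((d * d⁻¹) * e * (d * d⁻¹))) := by rw [h1]
      _ = (d⁻¹ * d) * ((d * d⁻¹) * e * (d * d⁻¹)) := (mul_assoc _ _ _).symm
      _ = (d * d⁻¹) * ((d * d⁻¹) * e * (d * d⁻¹)) := by rw [← m3]
      _ = (d * d⁻¹) * e * (d * d⁻¹) := h3
  have hz : IsIdempotentElem ((d * d⁻¹) * e * (d * d⁻¹)) :=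
    hE _ _ (hE _ _ (oE d) he) (oE d)
  have hinv : IsIdempotentElem d⁻¹ := by rw [h2]; exact hz
  have h4 : d = d * d⁻¹ := by
    calc d = d * d⁻¹ * d := (m1 d).symm
      _ = d * (d⁻¹ * d⁻¹) * d := by rw [hinv.eq]
      _ = (d * d⁻¹) * (d⁻¹ * d) := by simp only [mul_assoc]
      _ = (d * d⁻¹) * (d * d⁻¹) := by rw [← m3]
      _ = d * d⁻¹ := (oE d).eq
  show d * d = d
  calc d * d = (d * d⁻¹) * d := congrArg (· * d) h4
    _ = d := m1 d

/-- Key band lemma: if `x*y` and `y*x` are idempotent then `(x*y)*(y*x)*(x*y) = x*y`. -/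
lemma lemE1 (x y : S) (hp : IsIdempotentElem (x * y)) (hq : IsIdempotentElem (y * x)) :
    (x * y) * ((y * x) * (x * y)) = x * y := by
  have hpW : ∀ W : S, x * (y * (x * (y * W))) = x * (y * W) := fun W => by
    have h := congrArg (· * W) hp.eq
    simpa only [mul_assoc] using h
  have hpE : x * (y * (x * y)) = x * y := by simpa only [mul_assoc] using hp.eq
  have hqW : ∀ W : S, y * (x * (y * (x * W))) = y * (x * W) := fun W => by
    have h := congrArg (· * W) hq.eq
    simpa only [mul_assoc] using h
  have hqE : y * (x * (y * x)) = y * x := by simpa only [mul_assoc] using hq.eq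
  -- U := ((x*y)*x)*(y*x), V := ((y*x)*y)*(x*y)
  have huv : (((x * y) * x) * (y * x)) * (((y * x) * y) * (x * y)) = x * y := by
    simp only [mul_assoc, hpW, hpE, hqW, hqE]
  have hvu : (((y * x) * y) * (x * y)) * (((x * y) * x) * (y * x)) = y * x := by
    simp only [mul_assoc, hpW, hpE, hqW, hqE]
  have hxyu : (x * y) * (((x * y) * x) * (y * x)) = ((x * y) * x) * (y * x) := by
    simp only [mul_assoc, hpW, hpE, hqW, hqE]
  have huyx : (((x * y) * x) * (y * x)) * (y * x) = ((x * y) * x) * (y * x) := by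
    simp only [mul_assoc, hpW, hpE, hqW, hqE]
  set U : S := ((x * y) * x) * (y * x) with hU
  set V : S := ((y * x) * y) * (x * y) with hV
  have g1 : (U * U⁻¹) * (x * y) = x * y := by
    calc (U * U⁻¹) * (x * y) = (U * U⁻¹) * (U * V) := congrArg _ huv.symm
      _ = ((U * U⁻¹) * U) * V := (mul_assoc _ _ _).symm
      _ = U * V := by rw [m1]
      _ = x * y := huv
  have g2 : (x * y) * (U * U⁻¹) = U * U⁻¹ := by
    calc (x * y) * (U * U⁻¹) = ((x * y) * U) * U⁻¹ := (mul_assoc _ _ _).symm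
      _ = U * U⁻¹ := by rw [hxyu]
  have g3 : (U * U⁻¹) * (y * x) = U * U⁻¹ := by
    calc (U * U⁻¹) * (y * x) = (U⁻¹ * U) * (y * x) := by rw [m3]
      _ = U⁻¹ * (U * (y * x)) := mul_assoc _ _ _
      _ = U⁻¹ * U := by rw [huyx]
      _ = U * U⁻¹ := (m3 U).symm
  have hs : ((y * x) * (x * y)) * ((y * x) * (x * y)) = (y * x) * (x * y) :=
    (hE _ _ hq hp).eq
  have hP : (U * U⁻¹) * ((y * x) * (x * y)) = x * y := by
    calc (U * U⁻¹) * ((y * x) * (x * y)) = ((U * U⁻¹) * (y * x)) * (x * y) :=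
          (mul_assoc _ _ _).symm
      _ = (U * U⁻¹) * (x * y) := by rw [g3]
      _ = x * y := g1
  calc (x * y) * ((y * x) * (x * y))
      = ((U * U⁻¹) * ((y * x) * (x * y))) * ((y * x) * (x * y)) :=
        congrArg (· * ((y * x) * (x * y))) hP.symm
    _ = (U * U⁻¹) * (((y * x) * (x * y)) * ((y * x) * (x * y))) := mul_assoc _ _ _
    _ = (U * U⁻¹) * ((y * x) * (x * y)) := by rw [hs]
    _ = x * y := hP

end Orthodox

/-- Mutual-inverse relation: `p` and `q` have a common inverse. -/
def rY (p q : S) : Prop :=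
  ∃ x : S, p * x * p = p ∧ x * p * x = x ∧ q * x * q = q ∧ x * q * x = x

lemma rY_refl (a : S) : rY a a := ⟨a⁻¹, m1 a, m2 a, m1 a, m2 a⟩

lemma rY_symm {p q : S} (h : rY p q) : rY q p := by
  obtain ⟨x, h1, h2, h3, h4⟩ := h
  exact ⟨x, h3, h4, h1, h2⟩

section Orthodox2
variable (hE : ∀ e f : S, IsIdempotentElem e → IsIdempotentElem f → IsIdempotentElem (e * f))
include hE

lemma rY_left (c : S) {p q : S} (h : rY p q) : rY (c * p) (c * q) := by
  obtain ⟨x, h1, h2, h3, h4⟩ := h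
  exact ⟨x * c⁻¹, keyL1 hE c h1 h2, keyL2 hE c h1 h2, keyL1 hE c h3 h4, keyL2 hE c h3 h4⟩

lemma rY_right (c : S) {p q : S} (h : rY p q) : rY (p * c) (q * c) := by
  obtain ⟨x, h1, h2, h3, h4⟩ := h
  exact ⟨c⁻¹ * x, keyR1 hE c h1 h2, keyR2 hE c h1 h2, keyR1 hE c h3 h4, keyR2 hE c h3 h4⟩

lemma rY_pure {p q : S} (h : rY p q) (hq : IsIdempotentElem q) : IsIdempotentElem p := by
  obtain ⟨x, h1, h2, h3, h4⟩ := h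
  have hx : IsIdempotentElem x := lemA hE x hq h4
  exact lemA hE p hx h1

/-- Step 1 of the chain: `e*c` is `rY`-related to `(c*c⁻¹)*e*c`. -/
lemma step1 {e : S} (he : IsIdempotentElem e) (c : S) :
    rY (e * c) ((c * c⁻¹) * e * c) := by
  refine ⟨c⁻¹ * e, ?_, ?_, ?_, ?_⟩
  · simp only [mul_assoc, w_ee he, w_x1a hE c he, e_x1a hE c he]
  · simp only [mul_assoc, w_ee he, w_x2b hE c he, e_x2b hE c he]
  · simp only [mul_assoc, w_sq_oe hE c he, e_sq_oe hE c he, w_x1a hE c he, e_x1a hE c he]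
  · simp only [mul_assoc, w_sq_oe hE c he, e_sq_oe hE c he, w_x2b hE c he, e_x2b hE c he]

/-- Step 3 of the chain: `c*e*(c*c⁻¹)` is `rY`-related to `c*e`. -/
lemma step3 {e : S} (he : IsIdempotentElem e) (c : S) :
    rY (c * e * (c * c⁻¹)) (c * e) := by
  refine ⟨e * c⁻¹, ?_, ?_, ?_, ?_⟩
  · simp only [mul_assoc, w_ee he, w_ba c, e_ba c, w_sq_eo hE c he, e_sq_eo hE c he,
      w_x2a hE c he, e_x2a hE c he, w_x1b hE c he, e_x1b hE c he, w_aba c, e_aba c,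
      w_bab c, e_bab c, w_abb c, e_abb c, w_baa c, e_baa c, w_aab c, e_aab c,
      w_bba c, e_bba c, w_sq_o c, e_sq_o c, w_sq_oe hE c he, e_sq_oe hE c he,
      w_x1a hE c he, e_x1a hE c he, w_x2b hE c he, e_x2b hE c he]
  · simp only [mul_assoc, w_ee he, w_ba c, e_ba c, w_sq_eo hE c he, e_sq_eo hE c he,
      w_x2a hE c he, e_x2a hE c he, w_x1b hE c he, e_x1b hE c he, w_aba c, e_aba c,
      w_bab c, e_bab c, w_abb c, e_abb c, w_baa c, e_baa c, w_aab c, e_aab c,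
      w_bba c, e_bba c, w_sq_o c, e_sq_o c, w_sq_oe hE c he, e_sq_oe hE c he,
      w_x1a hE c he, e_x1a hE c he, w_x2b hE c he, e_x2b hE c he]
  · simp only [mul_assoc, w_ee he, w_ba c, e_ba c, w_sq_eo hE c he, e_sq_eo hE c he,
      w_x2a hE c he, e_x2a hE c he, w_x1b hE c he, e_x1b hE c he, w_aba c, e_aba c,
      w_bab c, e_bab c, w_abb c, e_abb c, w_baa c, e_baa c, w_aab c, e_aab c,
      w_bba c, e_bba c, w_sq_o c, e_sq_o c, w_sq_oe hE c he, e_sq_oe hE c he,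
      w_x1a hE c he, e_x1a hE c he, w_x2b hE c he, e_x2b hE c he]
  · simp only [mul_assoc, w_ee he, w_ba c, e_ba c, w_sq_eo hE c he, e_sq_eo hE c he,
      w_x2a hE c he, e_x2a hE c he, w_x1b hE c he, e_x1b hE c he, w_aba c, e_aba c,
      w_bab c, e_bab c, w_abb c, e_abb c, w_baa c, e_baa c, w_aab c, e_aab c,
      w_bba c, e_bba c, w_sq_o c, e_sq_o c, w_sq_oe hE c he, e_sq_oe hE c he,
      w_x1a hE c he, e_x1a hE c he, w_x2b hE c he, e_x2b hE c he]

/-- Step 2 of the chain: `(c*c⁻¹)*e*c` is `rY`-related to `c*e*(c*c⁻¹)`. -/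
lemma step2 {e : S} (he : IsIdempotentElem e) (c : S) :
    rY ((c * c⁻¹) * e * c) (c * e * (c * c⁻¹)) := by
  have hp' : IsIdempotentElem (((c * c⁻¹) * e * c⁻¹) * c) := by
    show _ * _ = _
    simp only [mul_assoc, w_ee he, w_ba c, e_ba c, w_aba c, e_aba c, w_bab c, e_bab c,
      w_abb c, e_abb c, w_baa c, e_baa c, w_aab c, e_aab c, w_bba c, e_bba c,
      w_sq_o c, e_sq_o c, w_sq_oe hE c he, e_sq_oe hE c he, w_sq_eo hE c he, e_sq_eo hE c he,
      w_x2a hE c he, e_x2a hE c he, w_x2b hE c he, e_x2b hE c he,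
      w_x1a hE c he, e_x1a hE c he, w_x1b hE c he, e_x1b hE c he]
  have hq' : IsIdempotentElem (c * ((c * c⁻¹) * e * c⁻¹)) := by
    show _ * _ = _
    simp only [mul_assoc, w_ee he, w_ba c, e_ba c, w_aba c, e_aba c, w_bab c, e_bab c,
      w_abb c, e_abb c, w_baa c, e_baa c, w_aab c, e_aab c, w_bba c, e_bba c,
      w_sq_o c, e_sq_o c, w_sq_oe hE c he, e_sq_oe hE c he, w_sq_eo hE c he, e_sq_eo hE c he,
      w_x2a hE c he, e_x2a hE c he, w_x2b hE c he, e_x2b hE c he,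
      w_x1a hE c he, e_x1a hE c he, w_x1b hE c he, e_x1b hE c he]
  have hxy : ((c * c⁻¹) * e * c⁻¹) * c = (c * c⁻¹) * e * (c * c⁻¹) := by
    simp only [mul_assoc, w_ba c, e_ba c]
  have hyx : c * ((c * c⁻¹) * e * c⁻¹) = c * e * c⁻¹ := by
    simp only [mul_assoc, w_aab c, e_aab c]
  have hknk : ((c * c⁻¹) * e * (c * c⁻¹)) * ((c * e * c⁻¹) * ((c * c⁻¹) * e * (c * c⁻¹)))
      = (c * c⁻¹) * e * (c * c⁻¹) := by
    have h := lemE1 hE ((c * c⁻¹) * e * c⁻¹) c hp' hq'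
    rw [hxy, hyx] at h
    exact h
  have hnk : (c * e * c⁻¹) * (((c * c⁻¹) * e * (c * c⁻¹)) * (c * e * c⁻¹))
      = c * e * c⁻¹ := by
    have h := lemE1 hE c ((c * c⁻¹) * e * c⁻¹) hq' hp'
    rw [hxy, hyx] at h
    exact h
  have hna : (c * e * c⁻¹) * c = c * e * (c * c⁻¹) := by
    simp only [mul_assoc, w_ba c, e_ba c]
  have hbk : c⁻¹ * ((c * c⁻¹) * e * (c * c⁻¹)) = c⁻¹ * e * (c * c⁻¹) := by
    simp only [mul_assoc, w_bab c, e_bab c]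
  have hok : (c * c⁻¹) * ((c * c⁻¹) * e * (c * c⁻¹)) = (c * c⁻¹) * e * (c * c⁻¹) := by
    simp only [mul_assoc, w_sq_o c, e_sq_o c]
  refine ⟨c⁻¹ * e * (c * c⁻¹), ?_, ?_, ?_, ?_⟩
  · simp only [mul_assoc, w_ee he, w_ba c, e_ba c, w_aba c, e_aba c, w_bab c, e_bab c,
      w_abb c, e_abb c, w_baa c, e_baa c, w_aab c, e_aab c, w_bba c, e_bba c,
      w_sq_o c, e_sq_o c, w_sq_oe hE c he, e_sq_oe hE c he, w_sq_eo hE c he, e_sq_eo hE c he,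
      w_x2a hE c he, e_x2a hE c he, w_x2b hE c he, e_x2b hE c he,
      w_x1a hE c he, e_x1a hE c he, w_x1b hE c he, e_x1b hE c he]
  · simp only [mul_assoc, w_ee he, w_ba c, e_ba c, w_aba c, e_aba c, w_bab c, e_bab c,
      w_abb c, e_abb c, w_baa c, e_baa c, w_aab c, e_aab c, w_bba c, e_bba c,
      w_sq_o c, e_sq_o c, w_sq_oe hE c he, e_sq_oe hE c he, w_sq_eo hE c he, e_sq_eo hE c he,
      w_x2a hE c he, e_x2a hE c he, w_x2b hE c he, e_x2b hE c he,
      w_x1a hE c he, e_x1a hE c he, w_x1b hE c he, e_x1b hE c he]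
  · -- (c*e*(c*c⁻¹)) * (c⁻¹*e*(c*c⁻¹)) * (c*e*(c*c⁻¹)) = c*e*(c*c⁻¹)
    have h1 : (c * e * (c * c⁻¹)) * (c⁻¹ * e * (c * c⁻¹))
        = (c * e * c⁻¹) * ((c * c⁻¹) * e * (c * c⁻¹)) := by
      simp only [mul_assoc, w_ba c, e_ba c, w_abb c, e_abb c, w_bab c, e_bab c]
    calc (c * e * (c * c⁻¹)) * (c⁻¹ * e * (c * c⁻¹)) * (c * e * (c * c⁻¹))
        = (c * e * c⁻¹) * ((c * c⁻¹) * e * (c * c⁻¹)) * (c * e * (c * c⁻¹)) := by rw [h1]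
      _ = (c * e * c⁻¹) * ((c * c⁻¹) * e * (c * c⁻¹)) * ((c * e * c⁻¹) * c) := by rw [hna]
      _ = ((c * e * c⁻¹) * (((c * c⁻¹) * e * (c * c⁻¹)) * (c * e * c⁻¹))) * c := by
          simp only [mul_assoc]
      _ = (c * e * c⁻¹) * c := by rw [hnk]
      _ = c * e * (c * c⁻¹) := hna
  · -- (c⁻¹*e*(c*c⁻¹)) * (c*e*(c*c⁻¹)) * (c⁻¹*e*(c*c⁻¹)) = c⁻¹*e*(c*c⁻¹)
    calc (c⁻¹ * e * (c * c⁻¹)) * (c * e * (c * c⁻¹)) * (c⁻¹ * e * (c * c⁻¹))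
        = (c⁻¹ * ((c * c⁻¹) * e * (c * c⁻¹))) * ((c * e * c⁻¹) * c)
            * (c⁻¹ * ((c * c⁻¹) * e * (c * c⁻¹))) := by rw [hbk, hna]
      _ = c⁻¹ * (((c * c⁻¹) * e * (c * c⁻¹)) * ((c * e * c⁻¹)
            * ((c * (c⁻¹ * ((c * c⁻¹) * e * (c * c⁻¹))))))) := by simp only [mul_assoc]
      _ = c⁻¹ * (((c * c⁻¹) * e * (c * c⁻¹)) * ((c * e * c⁻¹)
            * ((c * c⁻¹) * e * (c * c⁻¹)))) := by rw [← mul_assoc c c⁻¹, hok]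
      _ = c⁻¹ * ((c * c⁻¹) * e * (c * c⁻¹)) := by rw [hknk]
      _ = c⁻¹ * e * (c * c⁻¹) := hbk

/-- The chain: `e*c` is connected to `c*e` by `rY`-steps. -/
lemma chainTG {e : S} (he : IsIdempotentElem e) (c : S) :
    Relation.TransGen (rY (S := S)) (e * c) (c * e) :=
  ((Relation.TransGen.single (step1 hE he c)).tail (step2 hE he c)).tail (step3 hE he c)

omit hE in
lemma tg_symm {p q : S} (h : Relation.TransGen (rY (S := S)) p q) :
    Relation.TransGen (rY (S := S)) q p := by
  induction h with
  | single h => exact .single (rY_symm h)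
  | tail _ h2 ih => exact (Relation.TransGen.single (rY_symm h2)).trans ih

lemma tg_left (c : S) {p q : S} (h : Relation.TransGen (rY (S := S)) p q) :
    Relation.TransGen (rY (S := S)) (c * p) (c * q) := by
  induction h with
  | single h => exact .single (rY_left hE c h)
  | tail _ h2 ih => exact ih.tail (rY_left hE c h2)

lemma tg_right (c : S) {p q : S} (h : Relation.TransGen (rY (S := S)) p q) :
    Relation.TransGen (rY (S := S)) (p * c) (q * c) := by
  induction h with
  | single h => exact .single (rY_right hE c h)
  | tail _ h2 ih => exact ih.tail (rY_right hE c h2)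

lemma tg_pure {p q : S} (h : Relation.TransGen (rY (S := S)) p q)
    (hq : IsIdempotentElem q) : IsIdempotentElem p := by
  induction h with
  | single h => exact rY_pure hE h hq
  | tail _ h2 ih => exact ih (rY_pure hE h2 hq)

/-- The congruence generated by the mutual-inverse relation. -/
def thetaCon : Con S where
  r := Relation.TransGen (rY (S := S))
  iseqv := ⟨fun a => .single (rY_refl a), fun h => tg_symm h, Relation.TransGen.trans⟩
  mul' := fun {w x y z} h1 h2 => (tg_right hE y h1).trans (tg_left hE x h2)

end Orthodox2

/-- For any congruence `θ`: if `θ` relates `x*x` to `x`, then it relates `x` to `x*x⁻¹`. -/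
lemma conX (θ : Con S) (x : S) (h : θ (x * x) x) : θ x (x * x⁻¹) := by
  have h1 := θ.mul (θ.mul (θ.refl x⁻¹) h) (θ.refl x⁻¹)
  have e1 : (x⁻¹ * (x * x)) * x⁻¹ = x * x⁻¹ := by simp only [mul_assoc, w_baa x]
  have e2 : (x⁻¹ * x) * x⁻¹ = x⁻¹ := m2 x
  rw [e1, e2] at h1
  have h2 := θ.mul h1 (θ.refl x)
  have e3 : (x * x⁻¹) * x = x := m1 x
  have e4 : x⁻¹ * x = x * x⁻¹ := (m3 x).symm
  rw [e3, e4] at h2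
  exact h2

end OrthodoxProof

/-- A completely regular semigroup is orthodox iff there exists an idempotent pure
Clifford congruence on it. -/
theorem orthodox_iff_exists_pure_clifford :
    (∀ e f : S, IsIdempotentElem e → IsIdempotentElem f → IsIdempotentElem (e * f)) ↔
    (∃ θ : Con S, IsCliffordCon θ ∧
      ∀ a e : S, IsIdempotentElem e → θ a e → IsIdempotentElem a) := by
  constructor
  · intro hE
    refine ⟨OrthodoxProof.thetaCon hE, ?_, ?_⟩
    · intro x a h
      have h0 : OrthodoxProof.thetaCon hE x (x * x⁻¹) := OrthodoxProof.conX _ x h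
      have t1 := (OrthodoxProof.thetaCon hE).mul h0 ((OrthodoxProof.thetaCon hE).refl a)
      have t2 : OrthodoxProof.thetaCon hE ((x * x⁻¹) * a) (a * (x * x⁻¹)) :=
        OrthodoxProof.chainTG hE (OrthodoxProof.oE x) a
      have t3 := (OrthodoxProof.thetaCon hE).mul ((OrthodoxProof.thetaCon hE).refl a)
        ((OrthodoxProof.thetaCon hE).symm h0)
      exact (OrthodoxProof.thetaCon hE).trans t1
        ((OrthodoxProof.thetaCon hE).trans t2 t3)
    · intro p q hq h
      exact OrthodoxProof.tg_pure hE h hq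
  · rintro ⟨θ, hcliff, hpure⟩ e f he hf
    have he' : e * e = e := he
    have hf' : f * f = f := hf
    have h1 : θ (e * e) e := by rw [he']; exact θ.refl e
    have h2 : θ (e * f) (f * e) := hcliff e f h1
    have h3 := θ.mul (θ.refl e) (θ.mul (θ.symm h2) (θ.refl f))
    have e1 : e * ((f * e) * f) = (e * f) * (e * f) := by simp only [mul_assoc]
    have e2 : e * ((e * f) * f) = e * f := by
      rw [mul_assoc e f f, hf', ← mul_assoc, he']
    rw [e1, e2] at h3
    have h5 := OrthodoxProof.conX θ (e * f) h3
    exact hpure (e * f) _ (OrthodoxProof.oE (e * f)) h5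
end

section
/- A completely regular semigroup S is orthodox if and only if the least Clifford congruence ν is over rectangular bands, i.e., each ν-class containing an idempotent is a rectangular band. -/
set_option maxHeartbeats 1600000


variable {S : Type*} [CompletelyRegularSemigroup S]

namespace OrthodoxCR

/-- `x` is an inverse of `a` (in the sense of `V(a)`). -/
def vinv (a x : S) : Prop := a * x * a = a ∧ x * a * x = x

theorem vinv_self_inv (a : S) : vinv a a⁻¹ :=
  ⟨CompletelyRegularSemigroup.mul_inv_mul a, CompletelyRegularSemigroup.inv_mul_inv a⟩

theorem idem_inv_mul (u : S) : IsIdempotentElem (u⁻¹ * u) := by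
  show (u⁻¹ * u) * (u⁻¹ * u) = u⁻¹ * u
  have h : u * (u⁻¹ * u) = u := by
    rw [← mul_assoc, CompletelyRegularSemigroup.mul_inv_mul]
  rw [mul_assoc, h]

theorem con_idem_lift (c : Con S) {u : S} (h : c (u * u) u) : c u (u⁻¹ * u) := by
  have h2 : c (u⁻¹ * (u * u)) (u⁻¹ * u) := c.mul (c.refl u⁻¹) h
  have he : u⁻¹ * (u * u) = u := by
    rw [← mul_assoc, ← CompletelyRegularSemigroup.mul_inv_comm,
      CompletelyRegularSemigroup.mul_inv_mul]
  rwa [he] at h2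

/-- The key "common inverse" lemma: in an orthodox completely regular semigroup,
if `x` is a common inverse of `a` and `b`, and `y` is an inverse of `a`, then
`y` is an inverse of `b`. -/
theorem lemT (hO : ∀ e f : S, IsIdempotentElem e → IsIdempotentElem f → IsIdempotentElem (e * f))
    {a b x y : S} (h1 : vinv a x) (h2 : vinv b x) (h3 : vinv a y) : vinv b y := by
  obtain ⟨hax, hxa⟩ := h1
  obtain ⟨hbx, hxb⟩ := h2
  obtain ⟨hay, hya⟩ := h3
  have haxc : ∀ t : S, a * (x * (a * (t))) = a * (t) := fun t => by
    simp only [← mul_assoc]; rw [hax]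
  have haxr : a * (x * (a)) = a := by
    simp only [mul_assoc] at hax ⊢; exact hax
  have hxac : ∀ t : S, x * (a * (x * (t))) = x * (t) := fun t => by
    simp only [← mul_assoc]; rw [hxa]
  have hxar : x * (a * (x)) = x := by
    simp only [mul_assoc] at hxa ⊢; exact hxa
  have hbxc : ∀ t : S, b * (x * (b * (t))) = b * (t) := fun t => by
    simp only [← mul_assoc]; rw [hbx]
  have hbxr : b * (x * (b)) = b := by
    simp only [mul_assoc] at hbx ⊢; exact hbx
  have hxbc : ∀ t : S, x * (b * (x * (t))) = x * (t) := fun t => by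
    simp only [← mul_assoc]; rw [hxb]
  have hxbr : x * (b * (x)) = x := by
    simp only [mul_assoc] at hxb ⊢; exact hxb
  have hayc : ∀ t : S, a * (y * (a * (t))) = a * (t) := fun t => by
    simp only [← mul_assoc]; rw [hay]
  have hayr : a * (y * (a)) = a := by
    simp only [mul_assoc] at hay ⊢; exact hay
  have hyac : ∀ t : S, y * (a * (y * (t))) = y * (t) := fun t => by
    simp only [← mul_assoc]; rw [hya]
  have hyar : y * (a * (y)) = y := by
    simp only [mul_assoc] at hya ⊢; exact hya
  have Iax : IsIdempotentElem (a * x) := by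
    show (a * x) * (a * x) = a * x; rw [← mul_assoc, hax]
  have Ixa : IsIdempotentElem (x * a) := by
    show (x * a) * (x * a) = x * a; rw [← mul_assoc, hxa]
  have Ibx : IsIdempotentElem (b * x) := by
    show (b * x) * (b * x) = b * x; rw [← mul_assoc, hbx]
  have Ixb : IsIdempotentElem (x * b) := by
    show (x * b) * (x * b) = x * b; rw [← mul_assoc, hxb]
  have Iay : IsIdempotentElem (a * y) := by
    show (a * y) * (a * y) = a * y; rw [← mul_assoc, hay]
  have Iya : IsIdempotentElem (y * a) := by
    show (y * a) * (y * a) = y * a; rw [← mul_assoc, hya]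
  have iaxax : a * x * a * x = a * x := by rw [hax]
  have iaxaxc : ∀ t : S, a * (x * (a * (x * (t)))) = a * (x * (t)) := fun t => by
    simp only [← mul_assoc]; rw [iaxax]
  have iaxaxr : a * (x * (a * (x))) = a * (x) := by
    simp only [mul_assoc] at iaxax ⊢; exact iaxax
  have ixaxa : x * a * x * a = x * a := by rw [hxa]
  have ixaxac : ∀ t : S, x * (a * (x * (a * (t)))) = x * (a * (t)) := fun t => by
    simp only [← mul_assoc]; rw [ixaxa]
  have ixaxar : x * (a * (x * (a))) = x * (a) := by
    simp only [mul_assoc] at ixaxa ⊢; exact ixaxa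
  have ixbya : x * b * y * a * x * b * y * a = x * b * y * a := by
    have h : ((x * b) * (y * a)) * ((x * b) * (y * a)) = (x * b) * (y * a) := hO _ _ Ixb Iya
    simp only [← mul_assoc] at h; exact h
  have ixbyac : ∀ t : S, x * (b * (y * (a * (x * (b * (y * (a * (t)))))))) = x * (b * (y * (a * (t)))) := fun t => by
    simp only [← mul_assoc]; rw [ixbya]
  have ixbyar : x * (b * (y * (a * (x * (b * (y * (a))))))) = x * (b * (y * (a))) := by
    simp only [mul_assoc] at ixbya ⊢; exact ixbya
  have iaybx : a * y * b * x * a * y * b * x = a * y * b * x := by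
    have h : ((a * y) * (b * x)) * ((a * y) * (b * x)) = (a * y) * (b * x) := hO _ _ Iay Ibx
    simp only [← mul_assoc] at h; exact h
  have iaybxc : ∀ t : S, a * (y * (b * (x * (a * (y * (b * (x * (t)))))))) = a * (y * (b * (x * (t)))) := fun t => by
    simp only [← mul_assoc]; rw [iaybx]
  have iaybxr : a * (y * (b * (x * (a * (y * (b * (x))))))) = a * (y * (b * (x))) := by
    simp only [mul_assoc] at iaybx ⊢; exact iaybx
  have hBY6_s0 : b * x * b * y * a * x * b * y = b * y * a * x * b * y := by
    simp only [mul_assoc]; rw [hbxc]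
  have hBY6_s1 : b * x * b * y * a * x * b * y * a * y = b * x * b * y * a * x * b * y := by
    simp only [mul_assoc]; rw [hyar]
  have hBY6_s2 : b * x * b * y * a * x * b * y * a * y = b * x * b * y * a * y := by
    simp only [mul_assoc]; rw [ixbyac]
  have hBY6_s3 : b * x * b * y * a * y = b * x * b * y := by
    simp only [mul_assoc]; rw [hyar]
  have hBY6_s4 : b * x * b * y = b * y := by
    simp only [mul_assoc]; rw [hbxc]
  have hBY6 : b * y * a * x * b * y = b * y := ((((hBY6_s0.symm).trans hBY6_s1.symm).trans hBY6_s2).trans hBY6_s3).trans hBY6_s4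
  have hBY6c : ∀ t : S, b * (y * (a * (x * (b * (y * (t)))))) = b * (y * (t)) := fun t => by
    simp only [← mul_assoc]; rw [hBY6]
  have hBY6r : b * (y * (a * (x * (b * (y))))) = b * (y) := by
    simp only [mul_assoc] at hBY6 ⊢; exact hBY6
  have hYB6_s0 : y * a * y * b * x * a * y * b = y * b * x * a * y * b := by
    simp only [mul_assoc]; rw [hyac]
  have hYB6_s1 : y * a * y * b * x * a * y * b * x * b = y * a * y * b * x * a * y * b := by
    simp only [mul_assoc]; rw [hbxr]
  have hYB6_s2 : y * a * y * b * x * a * y * b * x * b = y * a * y * b * x * b := by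
    simp only [mul_assoc]; rw [iaybxc]
  have hYB6_s3 : y * a * y * b * x * b = y * b * x * b := by
    simp only [mul_assoc]; rw [hyac]
  have hYB6_s4 : y * b * x * b = y * b := by
    simp only [mul_assoc]; rw [hbxr]
  have hYB6 : y * b * x * a * y * b = y * b := ((((hYB6_s0.symm).trans hYB6_s1.symm).trans hYB6_s2).trans hYB6_s3).trans hYB6_s4
  have hYB6c : ∀ t : S, y * (b * (x * (a * (y * (b * (t)))))) = y * (b * (t)) := fun t => by
    simp only [← mul_assoc]; rw [hYB6]
  have hYB6r : y * (b * (x * (a * (y * (b))))) = y * (b) := by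
    simp only [mul_assoc] at hYB6 ⊢; exact hYB6
  have hPBY_s0 : b * y * a * x * b * y * a * x = b * y * a * x := by
    simp only [mul_assoc]; rw [hBY6c]
  have hPBY : b * y * a * x * b * y * a * x = b * y * a * x := hPBY_s0
  have hQBY_s0 : a * x * b * y * a * x * b * y = a * x * b * y := by
    simp only [mul_assoc]; rw [hBY6r]
  have hQBY : a * x * b * y * a * x * b * y = a * x * b * y := hQBY_s0
  have hPQBY_s0 : b * y * a * x * a * x * b * y = b * y * a * x * b * y := by
    simp only [mul_assoc]; rw [iaxaxc]
  have hPQBY_s1 : b * y * a * x * b * y = b * y := by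
    simp only [mul_assoc]; rw [hBY6r]
  have hPQBY : b * y * a * x * a * x * b * y = b * y := (hPQBY_s0).trans hPQBY_s1
  have IPby : IsIdempotentElem (b * y * a * x) := by
    show (b * y * a * x) * (b * y * a * x) = b * y * a * x
    simp only [mul_assoc] at hPBY ⊢; exact hPBY
  have IQby : IsIdempotentElem (a * x * b * y) := by
    show (a * x * b * y) * (a * x * b * y) = a * x * b * y
    simp only [mul_assoc] at hQBY ⊢; exact hQBY
  have Iby : IsIdempotentElem (b * y) := by
    have h : ((b * y * a * x) * (a * x * b * y)) * ((b * y * a * x) * (a * x * b * y))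
        = (b * y * a * x) * (a * x * b * y) := hO _ _ IPby IQby
    have h2 : (b * y * a * x) * (a * x * b * y) = b * y := by
      simp only [mul_assoc] at hPQBY ⊢; exact hPQBY
    rw [h2] at h; exact h
  have hPYB_s0 : y * b * x * a * y * b * x * a = y * b * x * a := by
    simp only [mul_assoc]; rw [hYB6c]
  have hPYB : y * b * x * a * y * b * x * a = y * b * x * a := hPYB_s0
  have hQYB_s0 : x * a * y * b * x * a * y * b = x * a * y * b := by
    simp only [mul_assoc]; rw [hYB6r]
  have hQYB : x * a * y * b * x * a * y * b = x * a * y * b := hQYB_s0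
  have hPQYB_s0 : y * b * x * a * x * a * y * b = y * b * x * a * y * b := by
    simp only [mul_assoc]; rw [ixaxac]
  have hPQYB_s1 : y * b * x * a * y * b = y * b := by
    simp only [mul_assoc]; rw [hYB6r]
  have hPQYB : y * b * x * a * x * a * y * b = y * b := (hPQYB_s0).trans hPQYB_s1
  have IPyb : IsIdempotentElem (y * b * x * a) := by
    show (y * b * x * a) * (y * b * x * a) = y * b * x * a
    simp only [mul_assoc] at hPYB ⊢; exact hPYB
  have IQyb : IsIdempotentElem (x * a * y * b) := by
    show (x * a * y * b) * (x * a * y * b) = x * a * y * b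
    simp only [mul_assoc] at hQYB ⊢; exact hQYB
  have Iyb : IsIdempotentElem (y * b) := by
    have h : ((y * b * x * a) * (x * a * y * b)) * ((y * b * x * a) * (x * a * y * b))
        = (y * b * x * a) * (x * a * y * b) := hO _ _ IPyb IQyb
    have h2 : (y * b * x * a) * (x * a * y * b) = y * b := by
      simp only [mul_assoc] at hPQYB ⊢; exact hPQYB
    rw [h2] at h; exact h
  have ibxay : b * x * a * y * b * x * a * y = b * x * a * y := by
    have h : ((b * x) * (a * y)) * ((b * x) * (a * y)) = (b * x) * (a * y) := hO _ _ Ibx Iay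
    simp only [← mul_assoc] at h; exact h
  have ibxayc : ∀ t : S, b * (x * (a * (y * (b * (x * (a * (y * (t)))))))) = b * (x * (a * (y * (t)))) := fun t => by
    simp only [← mul_assoc]; rw [ibxay]
  have ibxayr : b * (x * (a * (y * (b * (x * (a * (y))))))) = b * (x * (a * (y))) := by
    simp only [mul_assoc] at ibxay ⊢; exact ibxay
  have iybxb : y * b * x * b * y * b * x * b = y * b * x * b := by
    have h : ((y * b) * (x * b)) * ((y * b) * (x * b)) = (y * b) * (x * b) := hO _ _ Iyb Ixb
    simp only [← mul_assoc] at h; exact h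
  have iybxbc : ∀ t : S, y * (b * (x * (b * (y * (b * (x * (b * (t)))))))) = y * (b * (x * (b * (t)))) := fun t => by
    simp only [← mul_assoc]; rw [iybxb]
  have iybxbr : y * (b * (x * (b * (y * (b * (x * (b))))))) = y * (b * (x * (b))) := by
    simp only [mul_assoc] at iybxb ⊢; exact iybxb
  have iyaxb : y * a * x * b * y * a * x * b = y * a * x * b := by
    have h : ((y * a) * (x * b)) * ((y * a) * (x * b)) = (y * a) * (x * b) := hO _ _ Iya Ixb
    simp only [← mul_assoc] at h; exact h
  have iyaxbc : ∀ t : S, y * (a * (x * (b * (y * (a * (x * (b * (t)))))))) = y * (a * (x * (b * (t)))) := fun t => by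
    simp only [← mul_assoc]; rw [iyaxb]
  have iyaxbr : y * (a * (x * (b * (y * (a * (x * (b))))))) = y * (a * (x * (b))) := by
    simp only [mul_assoc] at iyaxb ⊢; exact iyaxb
  have ibyay : b * y * a * y * b * y * a * y = b * y * a * y := by
    have h : ((b * y) * (a * y)) * ((b * y) * (a * y)) = (b * y) * (a * y) := hO _ _ Iby Iay
    simp only [← mul_assoc] at h; exact h
  have ibyayc : ∀ t : S, b * (y * (a * (y * (b * (y * (a * (y * (t)))))))) = b * (y * (a * (y * (t)))) := fun t => by
    simp only [← mul_assoc]; rw [ibyay]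
  have ibyayr : b * (y * (a * (y * (b * (y * (a * (y))))))) = b * (y * (a * (y))) := by
    simp only [mul_assoc] at ibyay ⊢; exact ibyay
  have hM1_s0 : b * x * b * y * b = b * y * b := by
    simp only [mul_assoc]; rw [hbxc]
  have hM1_s1 : b * x * a * x * b * y * b = b * x * b * y * b := by
    simp only [mul_assoc]; rw [hxac]
  have hM1_s2 : b * x * a * y * a * x * b * y * b = b * x * a * x * b * y * b := by
    simp only [mul_assoc]; rw [hayc]
  have hM1_s3 : b * x * a * y * b * x * a * y * a * x * b * y * b = b * x * a * y * a * x * b * y * b := by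
    simp only [mul_assoc]; rw [ibxayc]
  have hM1_s4 : b * x * a * y * b * x * a * y * a * x * b * y * b = b * x * a * y * b * x * a * x * b * y * b := by
    simp only [mul_assoc]; rw [hayc]
  have hM1_s5 : b * x * a * y * b * x * a * x * b * y * b = b * x * a * y * b * x * b * y * b := by
    simp only [mul_assoc]; rw [hxac]
  have hM1_s6 : b * x * a * y * b * x * b * y * b * x * b = b * x * a * y * b * x * b * y * b := by
    simp only [mul_assoc]; rw [hbxr]
  have hM1_s7 : b * x * a * y * b * x * b * y * b * x * b = b * x * a * y * b * x * b := by
    simp only [mul_assoc]; rw [iybxbr]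
  have hM1_s8 : b * x * a * y * b * x * a * x * b = b * x * a * y * b * x * b := by
    simp only [mul_assoc]; rw [hxac]
  have hM1_s9 : b * x * a * y * b * x * a * y * a * x * b = b * x * a * y * b * x * a * x * b := by
    simp only [mul_assoc]; rw [hayc]
  have hM1_s10 : b * x * a * y * b * x * a * y * a * x * b = b * x * a * y * a * x * b := by
    simp only [mul_assoc]; rw [ibxayc]
  have hM1_s11 : b * x * a * y * a * x * b = b * x * a * x * b := by
    simp only [mul_assoc]; rw [hayc]
  have hM1_s12 : b * x * a * x * b = b * x * b := by
    simp only [mul_assoc]; rw [hxac]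
  have hM1_s13 : b * x * b = b := by
    simp only [mul_assoc]; rw [hbxr]
  have hM1 : b * y * b = b := (((((((((((((hM1_s0.symm).trans hM1_s1.symm).trans hM1_s2.symm).trans hM1_s3.symm).trans hM1_s4).trans hM1_s5).trans hM1_s6.symm).trans hM1_s7).trans hM1_s8.symm).trans hM1_s9.symm).trans hM1_s10).trans hM1_s11).trans hM1_s12).trans hM1_s13
  have hM2_s0 : y * a * y * b * y = y * b * y := by
    simp only [mul_assoc]; rw [hyac]
  have hM2_s1 : y * a * x * a * y * b * y = y * a * y * b * y := by
    simp only [mul_assoc]; rw [haxc]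
  have hM2_s2 : y * a * x * b * x * a * y * b * y = y * a * x * a * y * b * y := by
    simp only [mul_assoc]; rw [hxbc]
  have hM2_s3 : y * a * x * b * y * a * x * b * x * a * y * b * y = y * a * x * b * x * a * y * b * y := by
    simp only [mul_assoc]; rw [iyaxbc]
  have hM2_s4 : y * a * x * b * y * a * x * b * x * a * y * b * y = y * a * x * b * y * a * x * a * y * b * y := by
    simp only [mul_assoc]; rw [hxbc]
  have hM2_s5 : y * a * x * b * y * a * x * a * y * b * y * a * y = y * a * x * b * y * a * x * a * y * b * y := by
    simp only [mul_assoc]; rw [hyar]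
  have hM2_s6 : y * a * x * b * y * a * x * a * y * b * y * a * y = y * a * x * b * y * a * y * b * y * a * y := by
    simp only [mul_assoc]; rw [haxc]
  have hM2_s7 : y * a * x * b * y * a * y * b * y * a * y = y * a * x * b * y * a * y := by
    simp only [mul_assoc]; rw [ibyayr]
  have hM2_s8 : y * a * x * b * y * a * x * a * y = y * a * x * b * y * a * y := by
    simp only [mul_assoc]; rw [haxc]
  have hM2_s9 : y * a * x * b * y * a * x * b * x * a * y = y * a * x * b * y * a * x * a * y := by
    simp only [mul_assoc]; rw [hxbc]
  have hM2_s10 : y * a * x * b * y * a * x * b * x * a * y = y * a * x * b * x * a * y := by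
    simp only [mul_assoc]; rw [iyaxbc]
  have hM2_s11 : y * a * x * b * x * a * y = y * a * x * a * y := by
    simp only [mul_assoc]; rw [hxbc]
  have hM2_s12 : y * a * x * a * y = y * a * y := by
    simp only [mul_assoc]; rw [haxc]
  have hM2_s13 : y * a * y = y := by
    simp only [mul_assoc]; rw [hyar]
  have hM2 : y * b * y = y := (((((((((((((hM2_s0.symm).trans hM2_s1.symm).trans hM2_s2.symm).trans hM2_s3.symm).trans hM2_s4).trans hM2_s5.symm).trans hM2_s6).trans hM2_s7).trans hM2_s8.symm).trans hM2_s9.symm).trans hM2_s10).trans hM2_s11).trans hM2_s12).trans hM2_s13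
  exact ⟨hM1, hM2⟩

theorem vmul_left (hO : ∀ e f : S, IsIdempotentElem e → IsIdempotentElem f → IsIdempotentElem (e * f))
    {u v : S} (h : vinv u v⁻¹) (w : S) : vinv (w * u) (v⁻¹ * w⁻¹) := by
  obtain ⟨hbib, hibi⟩ := h
  have hbibc : ∀ t : S, u * (v⁻¹ * (u * (t))) = u * (t) := fun t => by
    simp only [← mul_assoc]; rw [hbib]
  have hbibr : u * (v⁻¹ * (u)) = u := by
    simp only [mul_assoc] at hbib ⊢; exact hbib
  have hibic : ∀ t : S, v⁻¹ * (u * (v⁻¹ * (t))) = v⁻¹ * (t) := fun t => by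
    simp only [← mul_assoc]; rw [hibi]
  have hibir : v⁻¹ * (u * (v⁻¹)) = v⁻¹ := by
    simp only [mul_assoc] at hibi ⊢; exact hibi
  have hcjc : w * w⁻¹ * w = w := CompletelyRegularSemigroup.mul_inv_mul w
  have hcjcc : ∀ t : S, w * (w⁻¹ * (w * (t))) = w * (t) := fun t => by
    simp only [← mul_assoc]; rw [hcjc]
  have hcjcr : w * (w⁻¹ * (w)) = w := by
    simp only [mul_assoc] at hcjc ⊢; exact hcjc
  have hjcj : w⁻¹ * w * w⁻¹ = w⁻¹ := CompletelyRegularSemigroup.inv_mul_inv w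
  have hjcjc : ∀ t : S, w⁻¹ * (w * (w⁻¹ * (t))) = w⁻¹ * (t) := fun t => by
    simp only [← mul_assoc]; rw [hjcj]
  have hjcjr : w⁻¹ * (w * (w⁻¹)) = w⁻¹ := by
    simp only [mul_assoc] at hjcj ⊢; exact hjcj
  have hswap : w * w⁻¹ = w⁻¹ * w := CompletelyRegularSemigroup.mul_inv_comm w
  have hswapc : ∀ t : S, w * (w⁻¹ * (t)) = w⁻¹ * (w * (t)) := fun t => by
    simp only [← mul_assoc]; rw [hswap]
  have hswapr : w * (w⁻¹) = w⁻¹ * (w) := by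
    exact hswap
  have Ibi : IsIdempotentElem (u * v⁻¹) := by
    show (u * v⁻¹) * (u * v⁻¹) = u * v⁻¹; rw [← mul_assoc, hbib]
  have Iib : IsIdempotentElem (v⁻¹ * u) := by
    show (v⁻¹ * u) * (v⁻¹ * u) = v⁻¹ * u; rw [← mul_assoc, hibi]
  have Icj : IsIdempotentElem (w * w⁻¹) := by
    show (w * w⁻¹) * (w * w⁻¹) = w * w⁻¹; rw [← mul_assoc, hcjc]
  have Ijc : IsIdempotentElem (w⁻¹ * w) := by
    show (w⁻¹ * w) * (w⁻¹ * w) = w⁻¹ * w; rw [← mul_assoc, hjcj]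
  have ijcbi : w⁻¹ * w * u * v⁻¹ * w⁻¹ * w * u * v⁻¹ = w⁻¹ * w * u * v⁻¹ := by
    have h : ((w⁻¹ * w) * (u * v⁻¹)) * ((w⁻¹ * w) * (u * v⁻¹)) = (w⁻¹ * w) * (u * v⁻¹) := hO _ _ Ijc Ibi
    simp only [← mul_assoc] at h; exact h
  have ijcbic : ∀ t : S, w⁻¹ * (w * (u * (v⁻¹ * (w⁻¹ * (w * (u * (v⁻¹ * (t)))))))) = w⁻¹ * (w * (u * (v⁻¹ * (t)))) := fun t => by
    simp only [← mul_assoc]; rw [ijcbi]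
  have ijcbir : w⁻¹ * (w * (u * (v⁻¹ * (w⁻¹ * (w * (u * (v⁻¹))))))) = w⁻¹ * (w * (u * (v⁻¹))) := by
    simp only [mul_assoc] at ijcbi ⊢; exact ijcbi
  have ibijc : u * v⁻¹ * w⁻¹ * w * u * v⁻¹ * w⁻¹ * w = u * v⁻¹ * w⁻¹ * w := by
    have h : ((u * v⁻¹) * (w⁻¹ * w)) * ((u * v⁻¹) * (w⁻¹ * w)) = (u * v⁻¹) * (w⁻¹ * w) := hO _ _ Ibi Ijc
    simp only [← mul_assoc] at h; exact h
  have ibijcc : ∀ t : S, u * (v⁻¹ * (w⁻¹ * (w * (u * (v⁻¹ * (w⁻¹ * (w * (t)))))))) = u * (v⁻¹ * (w⁻¹ * (w * (t)))) := fun t => by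
    simp only [← mul_assoc]; rw [ibijc]
  have ibijcr : u * (v⁻¹ * (w⁻¹ * (w * (u * (v⁻¹ * (w⁻¹ * (w))))))) = u * (v⁻¹ * (w⁻¹ * (w))) := by
    simp only [mul_assoc] at ibijc ⊢; exact ibijc
  have iibcj : v⁻¹ * u * w * w⁻¹ * v⁻¹ * u * w * w⁻¹ = v⁻¹ * u * w * w⁻¹ := by
    have h : ((v⁻¹ * u) * (w * w⁻¹)) * ((v⁻¹ * u) * (w * w⁻¹)) = (v⁻¹ * u) * (w * w⁻¹) := hO _ _ Iib Icj
    simp only [← mul_assoc] at h; exact h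
  have iibcjc : ∀ t : S, v⁻¹ * (u * (w * (w⁻¹ * (v⁻¹ * (u * (w * (w⁻¹ * (t)))))))) = v⁻¹ * (u * (w * (w⁻¹ * (t)))) := fun t => by
    simp only [← mul_assoc]; rw [iibcj]
  have iibcjr : v⁻¹ * (u * (w * (w⁻¹ * (v⁻¹ * (u * (w * (w⁻¹))))))) = v⁻¹ * (u * (w * (w⁻¹))) := by
    simp only [mul_assoc] at iibcj ⊢; exact iibcj
  have icjib : w * w⁻¹ * v⁻¹ * u * w * w⁻¹ * v⁻¹ * u = w * w⁻¹ * v⁻¹ * u := by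
    have h : ((w * w⁻¹) * (v⁻¹ * u)) * ((w * w⁻¹) * (v⁻¹ * u)) = (w * w⁻¹) * (v⁻¹ * u) := hO _ _ Icj Iib
    simp only [← mul_assoc] at h; exact h
  have icjibc : ∀ t : S, w * (w⁻¹ * (v⁻¹ * (u * (w * (w⁻¹ * (v⁻¹ * (u * (t)))))))) = w * (w⁻¹ * (v⁻¹ * (u * (t)))) := fun t => by
    simp only [← mul_assoc]; rw [icjib]
  have icjibr : w * (w⁻¹ * (v⁻¹ * (u * (w * (w⁻¹ * (v⁻¹ * (u))))))) = w * (w⁻¹ * (v⁻¹ * (u))) := by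
    simp only [mul_assoc] at icjib ⊢; exact icjib
  have hL1_s0 : w * w⁻¹ * w * u * v⁻¹ * w⁻¹ * w * u = w * u * v⁻¹ * w⁻¹ * w * u := by
    simp only [mul_assoc]; rw [hcjcc]
  have hL1_s1 : w * w⁻¹ * w * u * v⁻¹ * w⁻¹ * w * u * v⁻¹ * u = w * w⁻¹ * w * u * v⁻¹ * w⁻¹ * w * u := by
    simp only [mul_assoc]; rw [hbibr]
  have hL1_s2 : w * w⁻¹ * w * u * v⁻¹ * w⁻¹ * w * u * v⁻¹ * u = w * w⁻¹ * w * u * v⁻¹ * u := by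
    simp only [mul_assoc]; rw [ijcbic]
  have hL1_s3 : w * w⁻¹ * w * u * v⁻¹ * u = w * w⁻¹ * w * u := by
    simp only [mul_assoc]; rw [hbibr]
  have hL1_s4 : w * w⁻¹ * w * u = w * u := by
    simp only [mul_assoc]; rw [hcjcc]
  have hL1 : w * u * v⁻¹ * w⁻¹ * w * u = w * u := ((((hL1_s0.symm).trans hL1_s1.symm).trans hL1_s2).trans hL1_s3).trans hL1_s4
  have hL2_s0 : v⁻¹ * u * v⁻¹ * w⁻¹ * w * u * v⁻¹ * w⁻¹ = v⁻¹ * w⁻¹ * w * u * v⁻¹ * w⁻¹ := by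
    simp only [mul_assoc]; rw [hibic]
  have hL2_s1 : v⁻¹ * u * v⁻¹ * w⁻¹ * w * u * v⁻¹ * w⁻¹ * w * w⁻¹ = v⁻¹ * u * v⁻¹ * w⁻¹ * w * u * v⁻¹ * w⁻¹ := by
    simp only [mul_assoc]; rw [hjcjr]
  have hL2_s2 : v⁻¹ * u * v⁻¹ * w⁻¹ * w * u * v⁻¹ * w⁻¹ * w * w⁻¹ = v⁻¹ * u * v⁻¹ * w⁻¹ * w * w⁻¹ := by
    simp only [mul_assoc]; rw [ibijcc]
  have hL2_s3 : v⁻¹ * u * v⁻¹ * w⁻¹ * w * w⁻¹ = v⁻¹ * u * v⁻¹ * w⁻¹ := by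
    simp only [mul_assoc]; rw [hjcjr]
  have hL2_s4 : v⁻¹ * u * v⁻¹ * w⁻¹ = v⁻¹ * w⁻¹ := by
    simp only [mul_assoc]; rw [hibic]
  have hL2 : v⁻¹ * w⁻¹ * w * u * v⁻¹ * w⁻¹ = v⁻¹ * w⁻¹ := ((((hL2_s0.symm).trans hL2_s1.symm).trans hL2_s2).trans hL2_s3).trans hL2_s4
  constructor
  · show (w * u) * (v⁻¹ * w⁻¹) * (w * u) = w * u
    simp only [mul_assoc] at hL1 ⊢; exact hL1
  · show (v⁻¹ * w⁻¹) * (w * u) * (v⁻¹ * w⁻¹) = v⁻¹ * w⁻¹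
    simp only [mul_assoc] at hL2 ⊢; exact hL2

theorem vmul_right (hO : ∀ e f : S, IsIdempotentElem e → IsIdempotentElem f → IsIdempotentElem (e * f))
    {u v : S} (h : vinv u v⁻¹) (w : S) : vinv (u * w) (w⁻¹ * v⁻¹) := by
  obtain ⟨hbib, hibi⟩ := h
  have hbibc : ∀ t : S, u * (v⁻¹ * (u * (t))) = u * (t) := fun t => by
    simp only [← mul_assoc]; rw [hbib]
  have hbibr : u * (v⁻¹ * (u)) = u := by
    simp only [mul_assoc] at hbib ⊢; exact hbib
  have hibic : ∀ t : S, v⁻¹ * (u * (v⁻¹ * (t))) = v⁻¹ * (t) := fun t => by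
    simp only [← mul_assoc]; rw [hibi]
  have hibir : v⁻¹ * (u * (v⁻¹)) = v⁻¹ := by
    simp only [mul_assoc] at hibi ⊢; exact hibi
  have hcjc : w * w⁻¹ * w = w := CompletelyRegularSemigroup.mul_inv_mul w
  have hcjcc : ∀ t : S, w * (w⁻¹ * (w * (t))) = w * (t) := fun t => by
    simp only [← mul_assoc]; rw [hcjc]
  have hcjcr : w * (w⁻¹ * (w)) = w := by
    simp only [mul_assoc] at hcjc ⊢; exact hcjc
  have hjcj : w⁻¹ * w * w⁻¹ = w⁻¹ := CompletelyRegularSemigroup.inv_mul_inv w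
  have hjcjc : ∀ t : S, w⁻¹ * (w * (w⁻¹ * (t))) = w⁻¹ * (t) := fun t => by
    simp only [← mul_assoc]; rw [hjcj]
  have hjcjr : w⁻¹ * (w * (w⁻¹)) = w⁻¹ := by
    simp only [mul_assoc] at hjcj ⊢; exact hjcj
  have hswap : w * w⁻¹ = w⁻¹ * w := CompletelyRegularSemigroup.mul_inv_comm w
  have hswapc : ∀ t : S, w * (w⁻¹ * (t)) = w⁻¹ * (w * (t)) := fun t => by
    simp only [← mul_assoc]; rw [hswap]
  have hswapr : w * (w⁻¹) = w⁻¹ * (w) := by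
    exact hswap
  have Ibi : IsIdempotentElem (u * v⁻¹) := by
    show (u * v⁻¹) * (u * v⁻¹) = u * v⁻¹; rw [← mul_assoc, hbib]
  have Iib : IsIdempotentElem (v⁻¹ * u) := by
    show (v⁻¹ * u) * (v⁻¹ * u) = v⁻¹ * u; rw [← mul_assoc, hibi]
  have Icj : IsIdempotentElem (w * w⁻¹) := by
    show (w * w⁻¹) * (w * w⁻¹) = w * w⁻¹; rw [← mul_assoc, hcjc]
  have Ijc : IsIdempotentElem (w⁻¹ * w) := by
    show (w⁻¹ * w) * (w⁻¹ * w) = w⁻¹ * w; rw [← mul_assoc, hjcj]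
  have ijcbi : w⁻¹ * w * u * v⁻¹ * w⁻¹ * w * u * v⁻¹ = w⁻¹ * w * u * v⁻¹ := by
    have h : ((w⁻¹ * w) * (u * v⁻¹)) * ((w⁻¹ * w) * (u * v⁻¹)) = (w⁻¹ * w) * (u * v⁻¹) := hO _ _ Ijc Ibi
    simp only [← mul_assoc] at h; exact h
  have ijcbic : ∀ t : S, w⁻¹ * (w * (u * (v⁻¹ * (w⁻¹ * (w * (u * (v⁻¹ * (t)))))))) = w⁻¹ * (w * (u * (v⁻¹ * (t)))) := fun t => by
    simp only [← mul_assoc]; rw [ijcbi]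
  have ijcbir : w⁻¹ * (w * (u * (v⁻¹ * (w⁻¹ * (w * (u * (v⁻¹))))))) = w⁻¹ * (w * (u * (v⁻¹))) := by
    simp only [mul_assoc] at ijcbi ⊢; exact ijcbi
  have ibijc : u * v⁻¹ * w⁻¹ * w * u * v⁻¹ * w⁻¹ * w = u * v⁻¹ * w⁻¹ * w := by
    have h : ((u * v⁻¹) * (w⁻¹ * w)) * ((u * v⁻¹) * (w⁻¹ * w)) = (u * v⁻¹) * (w⁻¹ * w) := hO _ _ Ibi Ijc
    simp only [← mul_assoc] at h; exact h
  have ibijcc : ∀ t : S, u * (v⁻¹ * (w⁻¹ * (w * (u * (v⁻¹ * (w⁻¹ * (w * (t)))))))) = u * (v⁻¹ * (w⁻¹ * (w * (t)))) := fun t => by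
    simp only [← mul_assoc]; rw [ibijc]
  have ibijcr : u * (v⁻¹ * (w⁻¹ * (w * (u * (v⁻¹ * (w⁻¹ * (w))))))) = u * (v⁻¹ * (w⁻¹ * (w))) := by
    simp only [mul_assoc] at ibijc ⊢; exact ibijc
  have iibcj : v⁻¹ * u * w * w⁻¹ * v⁻¹ * u * w * w⁻¹ = v⁻¹ * u * w * w⁻¹ := by
    have h : ((v⁻¹ * u) * (w * w⁻¹)) * ((v⁻¹ * u) * (w * w⁻¹)) = (v⁻¹ * u) * (w * w⁻¹) := hO _ _ Iib Icj
    simp only [← mul_assoc] at h; exact h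
  have iibcjc : ∀ t : S, v⁻¹ * (u * (w * (w⁻¹ * (v⁻¹ * (u * (w * (w⁻¹ * (t)))))))) = v⁻¹ * (u * (w * (w⁻¹ * (t)))) := fun t => by
    simp only [← mul_assoc]; rw [iibcj]
  have iibcjr : v⁻¹ * (u * (w * (w⁻¹ * (v⁻¹ * (u * (w * (w⁻¹))))))) = v⁻¹ * (u * (w * (w⁻¹))) := by
    simp only [mul_assoc] at iibcj ⊢; exact iibcj
  have icjib : w * w⁻¹ * v⁻¹ * u * w * w⁻¹ * v⁻¹ * u = w * w⁻¹ * v⁻¹ * u := by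
    have h : ((w * w⁻¹) * (v⁻¹ * u)) * ((w * w⁻¹) * (v⁻¹ * u)) = (w * w⁻¹) * (v⁻¹ * u) := hO _ _ Icj Iib
    simp only [← mul_assoc] at h; exact h
  have icjibc : ∀ t : S, w * (w⁻¹ * (v⁻¹ * (u * (w * (w⁻¹ * (v⁻¹ * (u * (t)))))))) = w * (w⁻¹ * (v⁻¹ * (u * (t)))) := fun t => by
    simp only [← mul_assoc]; rw [icjib]
  have icjibr : w * (w⁻¹ * (v⁻¹ * (u * (w * (w⁻¹ * (v⁻¹ * (u))))))) = w * (w⁻¹ * (v⁻¹ * (u))) := by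
    simp only [mul_assoc] at icjib ⊢; exact icjib
  have hR1_s0 : u * w * w⁻¹ * v⁻¹ * u * w * w⁻¹ * w = u * w * w⁻¹ * v⁻¹ * u * w := by
    simp only [mul_assoc]; rw [hcjcr]
  have hR1_s1 : u * v⁻¹ * u * w * w⁻¹ * v⁻¹ * u * w * w⁻¹ * w = u * w * w⁻¹ * v⁻¹ * u * w * w⁻¹ * w := by
    simp only [mul_assoc]; rw [hbibc]
  have hR1_s2 : u * v⁻¹ * u * w * w⁻¹ * v⁻¹ * u * w * w⁻¹ * w = u * v⁻¹ * u * w * w⁻¹ * w := by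
    simp only [mul_assoc]; rw [iibcjc]
  have hR1_s3 : u * v⁻¹ * u * w * w⁻¹ * w = u * w * w⁻¹ * w := by
    simp only [mul_assoc]; rw [hbibc]
  have hR1_s4 : u * w * w⁻¹ * w = u * w := by
    simp only [mul_assoc]; rw [hcjcr]
  have hR1 : u * w * w⁻¹ * v⁻¹ * u * w = u * w := ((((hR1_s0.symm).trans hR1_s1.symm).trans hR1_s2).trans hR1_s3).trans hR1_s4
  have hR2_s0 : w⁻¹ * w * w⁻¹ * v⁻¹ * u * w * w⁻¹ * v⁻¹ = w⁻¹ * v⁻¹ * u * w * w⁻¹ * v⁻¹ := by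
    simp only [mul_assoc]; rw [hjcjc]
  have hR2_s1 : w⁻¹ * w * w⁻¹ * v⁻¹ * u * w * w⁻¹ * v⁻¹ * u * v⁻¹ = w⁻¹ * w * w⁻¹ * v⁻¹ * u * w * w⁻¹ * v⁻¹ := by
    simp only [mul_assoc]; rw [hibir]
  have hR2_s2 : w⁻¹ * w * w⁻¹ * v⁻¹ * u * w * w⁻¹ * v⁻¹ * u * v⁻¹ = w⁻¹ * w * w⁻¹ * v⁻¹ * u * v⁻¹ := by
    simp only [mul_assoc]; rw [icjibc]
  have hR2_s3 : w⁻¹ * w * w⁻¹ * v⁻¹ * u * v⁻¹ = w⁻¹ * w * w⁻¹ * v⁻¹ := by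
    simp only [mul_assoc]; rw [hibir]
  have hR2_s4 : w⁻¹ * w * w⁻¹ * v⁻¹ = w⁻¹ * v⁻¹ := by
    simp only [mul_assoc]; rw [hjcjc]
  have hR2 : w⁻¹ * v⁻¹ * u * w * w⁻¹ * v⁻¹ = w⁻¹ * v⁻¹ := ((((hR2_s0.symm).trans hR2_s1.symm).trans hR2_s2).trans hR2_s3).trans hR2_s4
  constructor
  · show (u * w) * (w⁻¹ * v⁻¹) * (u * w) = u * w
    simp only [mul_assoc] at hR1 ⊢; exact hR1
  · show (w⁻¹ * v⁻¹) * (u * w) * (w⁻¹ * v⁻¹) = w⁻¹ * v⁻¹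
    simp only [mul_assoc] at hR2 ⊢; exact hR2

/-- The relation "same set of inverses" as a congruence on an orthodox completely
regular semigroup. -/
def gam (hO : ∀ e f : S, IsIdempotentElem e → IsIdempotentElem f → IsIdempotentElem (e * f)) :
    Con S where
  r a b := ∀ z, vinv a z ↔ vinv b z
  iseqv := ⟨fun _ _ => Iff.rfl, fun h z => (h z).symm, fun h h' z => (h z).trans (h' z)⟩
  mul' := by
    intro p q p' q' hpq hpq'
    have h1 : ∀ z, vinv (p * p') z ↔ vinv (p * q') z := by
      have wa : vinv (p * p') (p'⁻¹ * p⁻¹) := vmul_left hO (vinv_self_inv p') p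
      have wb : vinv (p * q') (p'⁻¹ * p⁻¹) :=
        vmul_left hO ((hpq' p'⁻¹).mp (vinv_self_inv p')) p
      exact fun z => ⟨fun h => lemT hO wa wb h, fun h => lemT hO wb wa h⟩
    have h2 : ∀ z, vinv (p * q') z ↔ vinv (q * q') z := by
      have wa : vinv (p * q') (q'⁻¹ * p⁻¹) := vmul_right hO (vinv_self_inv p) q'
      have wb : vinv (q * q') (q'⁻¹ * p⁻¹) :=
        vmul_right hO ((hpq p⁻¹).mp (vinv_self_inv p)) q'
      exact fun z => ⟨fun h => lemT hO wa wb h, fun h => lemT hO wb wa h⟩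
    exact fun z => (h1 z).trans (h2 z)

theorem gam_iff (hO : ∀ e f : S, IsIdempotentElem e → IsIdempotentElem f → IsIdempotentElem (e * f))
    {a b : S} : gam hO a b ↔ ∀ z, vinv a z ↔ vinv b z := Iff.rfl

theorem gam_comm_idem
    (hO : ∀ e f : S, IsIdempotentElem e → IsIdempotentElem f → IsIdempotentElem (e * f))
    {e f : S} (he : IsIdempotentElem e) (hf : IsIdempotentElem f) :
    gam hO (e * f) (f * e) := by
  have he' : e * e = e := he
  have hf' : f * f = f := hf
  have hee : e * e = e := he'
  have heec : ∀ t : S, e * (e * (t)) = e * (t) := fun t => by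
    simp only [← mul_assoc]; rw [hee]
  have heer : e * (e) = e := by
    exact hee
  have hff : f * f = f := hf'
  have hffc : ∀ t : S, f * (f * (t)) = f * (t) := fun t => by
    simp only [← mul_assoc]; rw [hff]
  have hffr : f * (f) = f := by
    exact hff
  have hef4 : e * f * e * f = e * f := by
    have h := hO e f he hf
    have h2 : (e * f) * (e * f) = e * f := h
    simp only [← mul_assoc] at h2; exact h2
  have hef4c : ∀ t : S, e * (f * (e * (f * (t)))) = e * (f * (t)) := fun t => by
    simp only [← mul_assoc]; rw [hef4]
  have hef4r : e * (f * (e * (f))) = e * (f) := by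
    simp only [mul_assoc] at hef4 ⊢; exact hef4
  have hfe4 : f * e * f * e = f * e := by
    have h := hO f e hf he
    have h2 : (f * e) * (f * e) = f * e := h
    simp only [← mul_assoc] at h2; exact h2
  have hfe4c : ∀ t : S, f * (e * (f * (e * (t)))) = f * (e * (t)) := fun t => by
    simp only [← mul_assoc]; rw [hfe4]
  have hfe4r : f * (e * (f * (e))) = f * (e) := by
    simp only [mul_assoc] at hfe4 ⊢; exact hfe4
  have hW11_s0 : e * f * f * e * e * f = e * f * e * e * f := by
    simp only [mul_assoc]; rw [hffc]
  have hW11_s1 : e * f * e * e * f = e * f * e * f := by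
    simp only [mul_assoc]; rw [heec]
  have hW11_s2 : e * f * e * f = e * f := by
    simp only [mul_assoc]; rw [hef4r]
  have hW11 : e * f * f * e * e * f = e * f := ((hW11_s0).trans hW11_s1).trans hW11_s2
  have hW12_s0 : f * e * e * f * f * e = f * e * f * f * e := by
    simp only [mul_assoc]; rw [heec]
  have hW12_s1 : f * e * f * f * e = f * e * f * e := by
    simp only [mul_assoc]; rw [hffc]
  have hW12_s2 : f * e * f * e = f * e := by
    simp only [mul_assoc]; rw [hfe4r]
  have hW12 : f * e * e * f * f * e = f * e := ((hW12_s0).trans hW12_s1).trans hW12_s2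
  have w1 : vinv (e * f) (f * e) := by
    constructor
    · show (e * f) * (f * e) * (e * f) = e * f
      simp only [mul_assoc] at hW11 ⊢; exact hW11
    · show (f * e) * (e * f) * (f * e) = f * e
      simp only [mul_assoc] at hW12 ⊢; exact hW12
  have hfe2 : (f * e) * (f * e) = f * e := hO f e hf he
  have w2 : vinv (f * e) (f * e) := ⟨by rw [hfe2, hfe2], by rw [hfe2, hfe2]⟩
  rw [gam_iff]
  exact fun z => ⟨fun hh => lemT hO w1 w2 hh, fun hh => lemT hO w2 w1 hh⟩

/-- In a semigroup in which idempotents commute with each other and every element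
has a commuting inverse, idempotents are central. -/
theorem idem_central {M : Type*} [Semigroup M]
    (hcomm : ∀ p q : M, p * p = p → q * q = q → p * q = q * p)
    (hreg : ∀ x : M, ∃ y, x * y * x = x ∧ y * x * y = y ∧ x * y = y * x)
    {e : M} (he : e * e = e) (a : M) : e * a = a * e := by
  have inv_unique : ∀ z u v : M, z * u * z = z → u * z * u = u →
      z * v * z = z → v * z * v = v → u = v := by
    intro z u v hu1 hu2 hv1 hv2
    have iuz : (u * z) * (u * z) = u * z := by rw [← mul_assoc, hu2]
    have ivz : (v * z) * (v * z) = v * z := by rw [← mul_assoc, hv2]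
    have izu : (z * u) * (z * u) = z * u := by rw [← mul_assoc, hu1]
    have izv : (z * v) * (z * v) = z * v := by rw [← mul_assoc, hv1]
    have h1 : u = u * (z * v) := by
      calc u = u * z * u := hu2.symm
        _ = u * (z * v * z) * u := by rw [hv1]
        _ = u * ((z * v) * (z * u)) := by simp only [mul_assoc]
        _ = u * ((z * u) * (z * v)) := by rw [hcomm (z * v) (z * u) izv izu]
        _ = (u * z * u) * (z * v) := by simp only [mul_assoc]
        _ = u * (z * v) := by rw [hu2]
    have h2 : v = u * (z * v) := by
      calc v = v * z * v := hv2.symm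
        _ = v * (z * u * z) * v := by rw [hu1]
        _ = (v * z) * (u * z) * v := by simp only [mul_assoc]
        _ = (u * z) * (v * z) * v := by rw [hcomm (v * z) (u * z) ivz iuz]
        _ = u * (z * (v * z * v)) := by simp only [mul_assoc]
        _ = u * (z * v) := by rw [hv2]
    exact h1.trans h2.symm
  obtain ⟨a', h1, h2, h3⟩ := hreg a
  have hf : (a * a') * (a * a') = a * a' := by rw [← mul_assoc, h1]
  have haf : a * (a * a') = a := by rw [h3, ← mul_assoc, h1]
  have hfa' : (a * a') * a' = a' := by rw [h3]; exact h2
  have ha'f : a' * (a * a') = a' := by rw [← mul_assoc]; exact h2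
  have hef : e * (a * a') = (a * a') * e := hcomm e (a * a') he hf
  have cA1 : (e * a) * (a' * e) * (e * a) = e * a := by
    calc (e * a) * (a' * e) * (e * a)
        = e * ((a * a') * (e * (e * a))) := by simp only [mul_assoc]
      _ = e * ((a * a') * ((e * e) * a)) := by rw [← mul_assoc e e a]
      _ = e * ((a * a') * (e * a)) := by rw [he]
      _ = e * (((a * a') * e) * a) := by simp only [mul_assoc]
      _ = e * ((e * (a * a')) * a) := by rw [← hef]
      _ = (e * e) * ((a * a') * a) := by simp only [mul_assoc]
      _ = e * ((a * a') * a) := by rw [he]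
      _ = e * a := by rw [h1]
  have cA2 : (a' * e) * (e * a) * (a' * e) = a' * e := by
    calc (a' * e) * (e * a) * (a' * e)
        = a' * ((e * e) * ((a * a') * e)) := by simp only [mul_assoc]
      _ = a' * (e * ((a * a') * e)) := by rw [he]
      _ = a' * (e * (e * (a * a'))) := by rw [← hef]
      _ = a' * ((e * e) * (a * a')) := by simp only [mul_assoc]
      _ = a' * (e * (a * a')) := by rw [he]
      _ = a' * ((a * a') * e) := by rw [hef]
      _ = (a' * (a * a')) * e := by simp only [← mul_assoc]
      _ = a' * e := by rw [ha'f]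
  have cB1 : (a * e) * (e * a') * (a * e) = a * e := by
    calc (a * e) * (e * a') * (a * e)
        = a * ((e * e) * ((a' * a) * e)) := by simp only [mul_assoc]
      _ = a * (e * ((a' * a) * e)) := by rw [he]
      _ = a * (e * ((a * a') * e)) := by rw [← h3]
      _ = a * (e * (e * (a * a'))) := by rw [← hef]
      _ = a * ((e * e) * (a * a')) := by simp only [mul_assoc]
      _ = a * (e * (a * a')) := by rw [he]
      _ = a * ((a * a') * e) := by rw [hef]
      _ = (a * (a * a')) * e := by simp only [← mul_assoc]
      _ = a * e := by rw [haf]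
  have cB2 : (e * a') * (a * e) * (e * a') = e * a' := by
    calc (e * a') * (a * e) * (e * a')
        = e * ((a' * a) * ((e * e) * a')) := by simp only [mul_assoc]
      _ = e * ((a' * a) * (e * a')) := by rw [he]
      _ = e * ((a * a') * (e * a')) := by rw [← h3]
      _ = (e * ((a * a') * e)) * a' := by simp only [← mul_assoc]
      _ = (e * (e * (a * a'))) * a' := by rw [← hef]
      _ = ((e * e) * (a * a')) * a' := by simp only [← mul_assoc]
      _ = (e * (a * a')) * a' := by rw [he]
      _ = e * ((a * a') * a') := by simp only [mul_assoc]
      _ = e * a' := by rw [hfa']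
  obtain ⟨u1, p1, p2, p3⟩ := hreg (e * a)
  have hu1 : u1 = a' * e := inv_unique (e * a) u1 (a' * e) p1 p2 cA1 cA2
  have p3' : (e * a) * (a' * e) = (a' * e) * (e * a) := by rw [← hu1]; exact p3
  have hL : (e * a) * (a' * e) = e * (a * a') := by
    calc (e * a) * (a' * e) = e * ((a * a') * e) := by simp only [mul_assoc]
      _ = e * (e * (a * a')) := by rw [← hef]
      _ = (e * e) * (a * a') := by simp only [← mul_assoc]
      _ = e * (a * a') := by rw [he]
  have hR : (a' * e) * (e * a) = a' * (e * a) := by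
    calc (a' * e) * (e * a) = a' * ((e * e) * a) := by simp only [mul_assoc]
      _ = a' * (e * a) := by rw [he]
  have hstar : a' * (e * a) = e * (a * a') := by rw [← hR, ← p3', hL]
  have hI : e * a = (a * e) * (a * a') := by
    have h4 : a * (a' * (e * a)) = a * (e * (a * a')) := by rw [hstar]
    have h5 : a * (a' * (e * a)) = e * a := by
      calc a * (a' * (e * a)) = ((a * a') * e) * a := by simp only [← mul_assoc]
        _ = (e * (a * a')) * a := by rw [← hef]
        _ = e * ((a * a') * a) := by simp only [mul_assoc]
        _ = e * a := by rw [h1]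
    have h6 : a * (e * (a * a')) = (a * e) * (a * a') := by simp only [← mul_assoc]
    rw [← h5, h4, h6]
  obtain ⟨u2, q1, q2, q3⟩ := hreg (a * e)
  have hu2eq : u2 = e * a' := inv_unique (a * e) u2 (e * a') q1 q2 cB1 cB2
  have q3' : (a * e) * (e * a') = (e * a') * (a * e) := by rw [← hu2eq]; exact q3
  have key2 : (a * e) * (e * a') = e * (a * a') := by
    calc (a * e) * (e * a') = (e * a') * (a * e) := q3'
      _ = e * ((a' * a) * e) := by simp only [mul_assoc]
      _ = e * ((a * a') * e) := by rw [← h3]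
      _ = e * (e * (a * a')) := by rw [← hef]
      _ = (e * e) * (a * a') := by simp only [← mul_assoc]
      _ = e * (a * a') := by rw [he]
  have hII : a * e = (a * e) * (a * a') := by
    have r1 : (a * e) * (u2 * (a * e)) = a * e := by
      have q1' := q1
      simp only [← mul_assoc] at q1' ⊢; exact q1'
    have r2 : u2 * (a * e) = (a * e) * (e * a') := by rw [hu2eq]; exact q3'.symm
    calc a * e = (a * e) * (u2 * (a * e)) := r1.symm
      _ = (a * e) * ((a * e) * (e * a')) := by rw [r2]
      _ = (a * e) * (e * (a * a')) := by rw [key2]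
      _ = (a * (e * e)) * (a * a') := by simp only [← mul_assoc]
      _ = (a * e) * (a * a') := by rw [he]
  exact hI.trans hII.symm

theorem gam_clifford
    (hO : ∀ e f : S, IsIdempotentElem e → IsIdempotentElem f → IsIdempotentElem (e * f)) :
    IsCliffordCon (gam hO) := by
  intro u v huu
  set c := gam hO with hc
  have hcomm : ∀ p q : c.Quotient, p * p = p → q * q = q → p * q = q * p := fun p q =>
    Quotient.inductionOn₂' p q (fun p0 q0 hp hq => by
      have hp' : c (p0 * p0) p0 := (c.eq).mp (by rw [Con.coe_mul]; exact hp)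
      have hq' : c (q0 * q0) q0 := (c.eq).mp (by rw [Con.coe_mul]; exact hq)
      have hp2 : c p0 (p0⁻¹ * p0) := con_idem_lift c hp'
      have hq2 : c q0 (q0⁻¹ * q0) := con_idem_lift c hq'
      have key : c (p0 * q0) (q0 * p0) :=
        c.trans (c.mul hp2 hq2)
          (c.trans (gam_comm_idem hO (idem_inv_mul p0) (idem_inv_mul q0))
            (c.symm (c.mul hq2 hp2)))
      show ((p0 : S) : c.Quotient) * ((q0 : S) : c.Quotient)
          = ((q0 : S) : c.Quotient) * ((p0 : S) : c.Quotient)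
      rw [← Con.coe_mul, ← Con.coe_mul]
      exact (c.eq).mpr key)
  have hreg : ∀ x : c.Quotient, ∃ y, x * y * x = x ∧ y * x * y = y ∧ x * y = y * x := fun x =>
    Quotient.inductionOn' x (fun x0 => by
      refine ⟨((x0⁻¹ : S) : c.Quotient), ?_, ?_, ?_⟩
      · show ((x0 : S) : c.Quotient) * ((x0⁻¹ : S) : c.Quotient) * ((x0 : S) : c.Quotient)
            = ((x0 : S) : c.Quotient)
        rw [← Con.coe_mul, ← Con.coe_mul, CompletelyRegularSemigroup.mul_inv_mul]
      · show ((x0⁻¹ : S) : c.Quotient) * ((x0 : S) : c.Quotient) * ((x0⁻¹ : S) : c.Quotient)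
            = ((x0⁻¹ : S) : c.Quotient)
        rw [← Con.coe_mul, ← Con.coe_mul, CompletelyRegularSemigroup.inv_mul_inv]
      · show ((x0 : S) : c.Quotient) * ((x0⁻¹ : S) : c.Quotient)
            = ((x0⁻¹ : S) : c.Quotient) * ((x0 : S) : c.Quotient)
        rw [← Con.coe_mul, ← Con.coe_mul, CompletelyRegularSemigroup.mul_inv_comm])
  have hu : ((u : S) : c.Quotient) * ((u : S) : c.Quotient) = ((u : S) : c.Quotient) := by
    rw [← Con.coe_mul]
    exact (c.eq).mpr huu
  have hcent := idem_central hcomm hreg hu ((v : S) : c.Quotient)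
  have : ((u * v : S) : c.Quotient) = ((v * u : S) : c.Quotient) := by
    rw [Con.coe_mul, Con.coe_mul]; exact hcent
  exact (c.eq).mp this

end OrthodoxCR

open OrthodoxCR in
/-- A completely regular semigroup is orthodox iff its least Clifford congruence `ν`
is over rectangular bands: each `ν`-class of an idempotent is a rectangular band. -/
theorem orthodox_iff_nu_over_rect_bands (ν : Con S)
    (hν : IsCliffordCon ν) (hνleast : ∀ θ : Con S, IsCliffordCon θ → ν ≤ θ) :
    (∀ e f : S, IsIdempotentElem e → IsIdempotentElem f → IsIdempotentElem (e * f)) ↔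
    (∀ e : S, IsIdempotentElem e → ∀ a b : S, ν a e → ν b e →
      IsIdempotentElem a ∧ a * b * a = a) := by
  constructor
  · intro hO e he a b ha hb
    have hle : ν ≤ gam hO := hνleast _ (gam_clifford hO)
    have ga : ∀ z, vinv a z ↔ vinv e z := (gam_iff hO).mp (hle ha)
    have gb : ∀ z, vinv b z ↔ vinv e z := (gam_iff hO).mp (hle hb)
    have he' : e * e = e := he
    have hee : vinv e e := ⟨by rw [he', he'], by rw [he', he']⟩
    have hae : vinv a e := (ga e).mpr hee
    have hbe : vinv b e := (gb e).mpr hee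
    have idem_of : ∀ t : S, vinv t e → IsIdempotentElem t := by
      intro t ht
      have ht1 : t * e * t = t := ht.1
      have ht2 : e * t * e = e := ht.2
      have Ite : IsIdempotentElem (t * e) := by
        show (t * e) * (t * e) = t * e; rw [← mul_assoc, ht1]
      have Iet : IsIdempotentElem (e * t) := by
        show (e * t) * (e * t) = e * t; rw [← mul_assoc, ht2]
      have heq : (t * e) * (e * t) = t := by
        calc (t * e) * (e * t) = t * ((e * e) * t) := by simp only [mul_assoc]
          _ = t * (e * t) := by rw [he']
          _ = t * e * t := by rw [← mul_assoc]
          _ = t := ht1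
      have := hO _ _ Ite Iet
      rwa [heq] at this
    have hIa : IsIdempotentElem a := idem_of a hae
    have hIb : IsIdempotentElem b := idem_of b hbe
    have hb' : b * b = b := hIb
    have hbb : vinv b b := ⟨by rw [hb', hb'], by rw [hb', hb']⟩
    have hab : vinv a b := (ga b).mpr ((gb b).mp hbb)
    exact ⟨hIa, hab.1⟩
  · intro hRB e f he hf
    have he' : e * e = e := he
    have hf' : f * f = f := hf
    have h1 : ν (f * e) (e * f) := by
      refine hν f e ?_
      show ν (f * f) f
      rw [hf']
      exact ν.refl f
    have h2 : ν ((e * f) * (e * f)) (e * f) := by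
      have k : ν (e * ((f * e) * f)) (e * ((e * f) * f)) :=
        ν.mul (ν.refl e) (ν.mul h1 (ν.refl f))
      have e1 : e * ((f * e) * f) = (e * f) * (e * f) := by simp only [mul_assoc]
      have e2 : e * ((e * f) * f) = e * f := by
        calc e * ((e * f) * f) = (e * e) * (f * f) := by simp only [mul_assoc]
          _ = e * f := by rw [he', hf']
      rw [e1, e2] at k
      exact k
    have h3 : ν (e * f) ((e * f)⁻¹ * (e * f)) := con_idem_lift ν h2
    exact (hRB _ (idem_inv_mul (e * f)) (e * f) (e * f) h3 h3).1
end

section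
/- Let ρ be a congruence on a completely regular semigroup S such that the kernel of ρ ∨ κ equals the kernel of ρ, where κ is the least cryptogroup congruence. Then the least cryptogroup congruence on S/ρ, which equals (ρ ∨ κ)/ρ, is idempotent pure, and hence each of its classes containing an idempotent is a rectangular band. -/
variable {S : Type*} [CompletelyRegularSemigroup S]

open CompletelyRegularSemigroup

section Helpers
variable {R : Type*} [CompletelyRegularSemigroup R]

theorem crsInvUnique {G : Type*} [Semigroup G] {a x y : G}
    (hx1 : a * x * a = a) (hx2 : x * a * x = x) (hx3 : a * x = x * a)
    (hy1 : a * y * a = a) (hy2 : y * a * y = y) (hy3 : a * y = y * a) : x = y := by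
  have h1 : (a * x) * (a * y) = a * y := by rw [← mul_assoc, hx1]
  have h2 : (a * x) * (a * y) = a * x := by
    rw [hx3, hy3, mul_assoc, ← mul_assoc a y a, hy1]
  have hef : a * x = a * y := h2.symm.trans h1
  calc x = x * a * x := hx2.symm
    _ = x * (a * x) := mul_assoc _ _ _
    _ = x * (a * y) := by rw [hef]
    _ = x * a * y := (mul_assoc _ _ _).symm
    _ = a * x * y := by rw [← hx3]
    _ = a * y * y := by rw [hef]
    _ = y * a * y := by rw [hy3]
    _ = y := hy2

variable {R : Type*} [CompletelyRegularSemigroup R]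

theorem conInvCompat (c : Con R) {a b : R} (h : c a b) : c a⁻¹ b⁻¹ := by
  have hab : ((a : R) : c.Quotient) = ((b : R) : c.Quotient) := (c.eq).mpr h
  have key : ((a⁻¹ : R) : c.Quotient) = ((b⁻¹ : R) : c.Quotient) := by
    apply crsInvUnique (a := ((a : R) : c.Quotient))
    · rw [← Con.coe_mul, ← Con.coe_mul, mul_inv_mul]
    · rw [← Con.coe_mul, ← Con.coe_mul, inv_mul_inv]
    · rw [← Con.coe_mul, ← Con.coe_mul, mul_inv_comm]
    · rw [hab, ← Con.coe_mul, ← Con.coe_mul, mul_inv_mul]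
    · rw [hab, ← Con.coe_mul, ← Con.coe_mul, inv_mul_inv]
    · rw [hab, ← Con.coe_mul, ← Con.coe_mul, mul_inv_comm]
  exact (c.eq).mp key

theorem conBandInv (c : Con R) {x : R} (h : c (x * x) x) : c x x⁻¹ := by
  have hx : ((x * x : R) : c.Quotient) = ((x : R) : c.Quotient) := (c.eq).mpr h
  have key : ((x : R) : c.Quotient) = ((x⁻¹ : R) : c.Quotient) := by
    apply crsInvUnique (a := ((x : R) : c.Quotient))
    · rw [← Con.coe_mul, hx, ← Con.coe_mul, hx]
    · rw [← Con.coe_mul, hx, ← Con.coe_mul, hx]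
    · rfl
    · rw [← Con.coe_mul, ← Con.coe_mul, mul_inv_mul]
    · rw [← Con.coe_mul, ← Con.coe_mul, inv_mul_inv]
    · rw [← Con.coe_mul, ← Con.coe_mul, mul_inv_comm]
  exact (c.eq).mp key

theorem conZero (c : Con R) {x : R} (h : c (x * x) x) : c (x * x⁻¹) x :=
  c.trans (c.mul (c.refl x) (c.symm (conBandInv c h))) h

theorem bandCrypto (c : Con R) (h : ∀ x : R, c (x * x) x) : IsCryptoCon c := by
  intro a b
  have hz : ∀ x : R, c (x * x⁻¹) x := fun x => conZero c (h x)
  exact c.trans (hz (a * b)) (c.symm (c.trans (hz _) (c.mul (hz a) (hz b))))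

/-- `x ∈ R u R`. -/
def inI (u x : R) : Prop := ∃ p q : R, x = p * u * q

theorem inI_self (x : R) : inI x x :=
  ⟨x * x⁻¹, x⁻¹ * x, by rw [mul_inv_mul, ← mul_assoc, mul_inv_mul]⟩

theorem inI_sq (x : R) : inI (x * x) x :=
  ⟨x * x⁻¹, x⁻¹, by
    rw [← mul_assoc (x * x⁻¹) x x, mul_inv_mul, mul_assoc, mul_inv_comm,
      ← mul_assoc, mul_inv_mul]⟩

theorem inI_trans {x u w : R} (h1 : inI u x) (h2 : inI w u) : inI w x := by
  obtain ⟨p, q, e1⟩ := h1; obtain ⟨r, s, e2⟩ := h2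
  exact ⟨p * r, s * q, by rw [e1, e2]; simp [mul_assoc]⟩

theorem inI_mul_left (u v : R) : inI u (u * v) :=
  ⟨u * u⁻¹, v, by rw [mul_inv_mul]⟩

theorem inI_mul_right (u v : R) : inI v (u * v) :=
  ⟨u, v⁻¹ * v, by rw [mul_assoc, ← mul_assoc v, mul_inv_mul]⟩

theorem inI_rot (u v : R) : inI (v * u) (u * v) :=
  inI_trans (inI_sq (u * v)) ⟨u, v, by simp [mul_assoc]⟩

theorem inI_mid (u s v : R) : inI (u * v) (u * s * v) := by
  have h1 : inI ((u * s * v) * (u * s * v)) (u * s * v) := inI_sq _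
  have h2 : inI (v * u) ((u * s * v) * (u * s * v)) := ⟨u * s, s * v, by simp [mul_assoc]⟩
  exact inI_trans (inI_trans h1 h2) (inI_rot v u)

theorem inI_key {x u v : R} (hu : inI u x) (hv : inI v x) : inI (u * v) x := by
  obtain ⟨p, q, h1⟩ := hu; obtain ⟨r, s, h2⟩ := hv
  have e : x * x = p * (u * (q * r) * v) * s := by
    nth_rewrite 1 [h1]; rw [h2]; simp [mul_assoc]
  exact inI_trans (inI_trans (inI_sq x) ⟨p, s, e⟩) (inI_mid u (q * r) v)

def jCon (R : Type*) [CompletelyRegularSemigroup R] : Con R :=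
  { r := fun x y => inI y x ∧ inI x y,
    iseqv := ⟨fun x => ⟨inI_self x, inI_self x⟩, fun h => ⟨h.2, h.1⟩,
      fun h1 h2 => ⟨inI_trans h1.1 h2.1, inI_trans h2.2 h1.2⟩⟩,
    mul' := fun {w x y z} h1 h2 =>
      ⟨inI_key (inI_trans (inI_mul_left w y) h1.1) (inI_trans (inI_mul_right w y) h2.1),
       inI_key (inI_trans (inI_mul_left x z) h1.2) (inI_trans (inI_mul_right x z) h2.2)⟩ }

theorem jCon_band (x : R) : jCon R (x * x) x := ⟨inI_mul_left x x, inI_sq x⟩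

theorem rectStep {e g : R} (hee : e * e = e) (hgg : g * g = g) (heg : e * g = g)
    (hge : g * e = g) (hN : inI g e) : e = g := by
  obtain ⟨u, v, huv⟩ := hN
  have h1 : e = u * (g * (v * e)) := by
    calc e = e * e := hee.symm
      _ = (u * g * v) * e := by rw [← huv]
      _ = u * (g * (v * e)) := by simp [mul_assoc]
  have h2 : e * ((g * (v * e))⁻¹ * (g * (v * e))) = e := by
    calc e * ((g * (v * e))⁻¹ * (g * (v * e)))
        = (u * (g * (v * e))) * ((g * (v * e))⁻¹ * (g * (v * e))) := by rw [← h1]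
      _ = u * ((g * (v * e)) * (g * (v * e))⁻¹ * (g * (v * e))) := by simp [mul_assoc]
      _ = u * (g * (v * e)) := by rw [mul_inv_mul]
      _ = e := h1.symm
  have h3 : e * (g * (v * e)) = g * (v * e) := by
    calc e * (g * (v * e)) = (e * g) * (v * e) := by rw [mul_assoc]
      _ = g * (v * e) := by rw [heg]
  have h4 : e = g * ((v * e) * (g * (v * e))⁻¹) := by
    calc e = e * ((g * (v * e))⁻¹ * (g * (v * e))) := h2.symm
      _ = e * ((g * (v * e)) * (g * (v * e))⁻¹) := by rw [mul_inv_comm]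
      _ = (e * (g * (v * e))) * (g * (v * e))⁻¹ := (mul_assoc _ _ _).symm
      _ = (g * (v * e)) * (g * (v * e))⁻¹ := by rw [h3]
      _ = g * ((v * e) * (g * (v * e))⁻¹) := by rw [mul_assoc]
  have h5 : g * e = e := by
    calc g * e = g * (g * ((v * e) * (g * (v * e))⁻¹)) := by rw [← h4]
      _ = (g * g) * ((v * e) * (g * (v * e))⁻¹) := by rw [← mul_assoc]
      _ = g * ((v * e) * (g * (v * e))⁻¹) := by rw [hgg]
      _ = e := h4.symm
  exact h5.symm.trans hge

theorem rectMain {e f : R} (hee : e * e = e) (hgg : (e * f * e) * (e * f * e) = e * f * e)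
    (hNf : inI f e) : e * f * e = e := by
  have heg : e * (e * f * e) = e * f * e := by rw [← mul_assoc, ← mul_assoc, hee]
  have hge : (e * f * e) * e = e * f * e := by rw [mul_assoc (e * f), hee]
  have hN : inI (e * f * e) e := inI_key (inI_key (inI_self e) hNf) (inI_self e)
  exact (rectStep hee hgg heg hge hN).symm

def quotInv (c : Con R) : Inv c.Quotient :=
  ⟨fun x => Con.liftOn x (fun a => ((a⁻¹ : R) : c.Quotient))
    (fun _ _ h => (c.eq).mpr (conInvCompat c h))⟩

def quotCR (c : Con R) : CompletelyRegularSemigroup c.Quotient :=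
  { Con.semigroup c, quotInv c with
    mul_inv_mul := fun x => Con.induction_on x fun a =>
      congrArg (fun z : R => ((z : R) : c.Quotient)) (mul_inv_mul a)
    inv_mul_inv := fun x => Con.induction_on x fun a =>
      congrArg (fun z : R => ((z : R) : c.Quotient)) (inv_mul_inv a)
    mul_inv_comm := fun x => Con.induction_on x fun a =>
      congrArg (fun z : R => ((z : R) : c.Quotient)) (mul_inv_comm a) }


end Helpers

/-- If `ker (ρ ∨ κ) = ker ρ`, then the least cryptogroup congruence `(ρ ∨ κ)/ρ` on
`S/ρ` is idempotent pure, and each of its classes containing an idempotent of `S/ρ`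
is a rectangular band. -/
theorem quotient_kappa_pure_and_over_rect_bands (ρ κ : Con S)
    (hκ : IsCryptoCon κ) (hκleast : ∀ θ : Con S, IsCryptoCon θ → κ ≤ θ)
    (hker : conKer (ρ ⊔ κ) = conKer ρ) :
    (∀ a b : S, (ρ ⊔ κ) a b → ρ (b * b) b → ρ (a * a) a) ∧
    (∀ a b c : S, ρ (a * a) a → (ρ ⊔ κ) b a → (ρ ⊔ κ) c a →
      ρ (b * b) b ∧ ρ (b * c * b) b) := by
  have key : ∀ x y : S, (ρ ⊔ κ) x y → ρ (y * y) y → ρ (x * x) x := by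
    intro x y hxy hyy
    have hy0 : ρ (y * y⁻¹) y := conZero ρ hyy
    have hyidem : IsIdempotentElem (y * y⁻¹) := by
      show (y * y⁻¹) * (y * y⁻¹) = y * y⁻¹
      rw [← mul_assoc, mul_inv_mul]
    have hxker : x ∈ conKer (ρ ⊔ κ) :=
      ⟨y * y⁻¹, hyidem, (ρ ⊔ κ).trans hxy (Con.le_def.mp le_sup_left (ρ.symm hy0))⟩
    rw [hker] at hxker
    obtain ⟨f, hfid, hxf⟩ := hxker
    have hff : f * f = f := hfid
    have h2 : ρ (x * x) (f * f) := ρ.mul hxf hxf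
    rw [hff] at h2
    exact ρ.trans h2 (ρ.symm hxf)
  refine ⟨key, ?_⟩
  intro a b c ha hba hca
  have hb2 : ρ (b * b) b := key b a hba ha
  have hc2 : ρ (c * c) c := key c a hca ha
  have ha3 : ρ (a * a * a) a := ρ.trans (ρ.mul ha (ρ.refl a)) ha
  have hbcb : (ρ ⊔ κ) (b * c * b) a :=
    (ρ ⊔ κ).trans ((ρ ⊔ κ).mul ((ρ ⊔ κ).mul hba hca) hba) (Con.le_def.mp le_sup_left ha3)
  have hbcb2 : ρ ((b * c * b) * (b * c * b)) (b * c * b) := key (b * c * b) a hbcb ha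
  refine ⟨hb2, ?_⟩
  letI : CompletelyRegularSemigroup ρ.Quotient := quotCR ρ
  have cm : ∀ x y : S, ((x * y : S) : ρ.Quotient) = (x : ρ.Quotient) * (y : ρ.Quotient) :=
    fun _ _ => rfl
  have hJ : IsCryptoCon (jCon ρ.Quotient) := bandCrypto _ jCon_band
  let cS : Con S := Con.comap (fun s : S => (s : ρ.Quotient)) cm (jCon ρ.Quotient)
  have hcS : IsCryptoCon cS := fun x y => hJ (x : ρ.Quotient) (y : ρ.Quotient)
  have hρle : ρ ≤ cS := by
    intro x y h
    show jCon ρ.Quotient (x : ρ.Quotient) (y : ρ.Quotient)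
    have : ((x : S) : ρ.Quotient) = ((y : S) : ρ.Quotient) := (ρ.eq).mpr h
    rw [this]
    exact (jCon ρ.Quotient).refl _
  have hσle : ρ ⊔ κ ≤ cS := sup_le hρle (hκleast cS hcS)
  have hbcS : cS b c := hσle ((ρ ⊔ κ).trans hba ((ρ ⊔ κ).symm hca))
  have hBC : inI (c : ρ.Quotient) (b : ρ.Quotient) := hbcS.1
  have hBB : (b : ρ.Quotient) * (b : ρ.Quotient) = (b : ρ.Quotient) := by
    rw [← cm]; exact (ρ.eq).mpr hb2
  have hG : ((b : ρ.Quotient) * (c : ρ.Quotient) * (b : ρ.Quotient)) *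
      ((b : ρ.Quotient) * (c : ρ.Quotient) * (b : ρ.Quotient)) =
      (b : ρ.Quotient) * (c : ρ.Quotient) * (b : ρ.Quotient) := by
    simp only [← cm]; exact (ρ.eq).mpr hbcb2
  have hfin : (b : ρ.Quotient) * (c : ρ.Quotient) * (b : ρ.Quotient) = (b : ρ.Quotient) :=
    rectMain hBB hG hBC
  have : ((b * c * b : S) : ρ.Quotient) = ((b : S) : ρ.Quotient) := by
    simp only [cm]; exact hfin
  exact (ρ.eq).mp this
end
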